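/- arXiv:1805.07083 — 8 statements merged into one kernel-verified Lean document; each statement's English description precedes it below -/
import Mathlib

section
/- Let G be a locally compact Hausdorff topological group and let (Γₙ)_{n∈ℕ} be a sequence of cocompact lattices in G which is uniformly discrete. Then for every compact set C ⊆ G there exists r ∈ ℕ such that #(x⁻¹Γₙ* x ∩ C) ≤ r holds for all n ∈ ℕ and all x ∈ G. -/
/-!
Choose a neighbourhood `V` of `1` with `V⁻¹ V ⊆ U` and cover `C` by finitely many translates
`g⁻¹ V⁻¹`. Two points `a, b` of one translate satisfy `a⁻¹ b ∈ V⁻¹ V ⊆ U`, so each translate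
meets a `U`-separated set in at most one point. Every conjugate `x⁻¹ Γₙ x` is `U`-separated, and
the number of translates depends only on `U` and `C`.
-/

open Topology

section

variable {G : Type*} [Group G]

theorem exists_forall_encard_inter_le_of_separated [TopologicalSpace G] [IsTopologicalGroup G]
    {U : Set G} (hU : U ∈ 𝓝 1) {C : Set G} (hC : IsCompact C) :
    ∃ r : ℕ, ∀ S : Set G, (∀ a ∈ S, ∀ b ∈ S, a⁻¹ * b ∈ U → a = b) →
      (S ∩ C).encard ≤ r := by
  obtain ⟨V, hV, hVU⟩ := exists_nhds_split_inv hU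
  obtain ⟨t, hCt⟩ := compact_covered_by_mul_left_translates hC (V := V⁻¹)
    ⟨1, mem_interior_iff_mem_nhds.2 (inv_mem_nhds_one G hV)⟩
  refine ⟨t.card, fun S hS => ?_⟩
  have hpiece : ∀ g ∈ t, (S ∩ (g * ·) ⁻¹' V⁻¹).encard ≤ 1 := by
    refine fun g _ => Set.encard_le_one_iff.2 fun a b ha hb => hS a ha.1 b hb.1 ?_
    simpa [div_eq_mul_inv, mul_assoc] using hVU _ ha.2 _ hb.2
  calc (S ∩ C).encard
      ≤ (⋃ g ∈ t, S ∩ (g * ·) ⁻¹' V⁻¹).encard := by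
        refine Set.encard_le_encard fun a ha => ?_
        obtain ⟨g, hg, hag⟩ := Set.mem_iUnion₂.1 (hCt ha.2)
        exact Set.mem_iUnion₂.2 ⟨g, hg, ha.1, hag⟩
    _ ≤ ∑ g ∈ t, (S ∩ (g * ·) ⁻¹' V⁻¹).encard := Finset.set_encard_biUnion_le _ _
    _ ≤ ∑ _g ∈ t, 1 := Finset.sum_le_sum hpiece
    _ = t.card := by simp

theorem conj_image_subgroup_separated {U : Set G} (H : Subgroup G) (x : G)
    (hHU : ((fun γ => x⁻¹ * γ * x) '' (H : Set G)) ∩ U = {1}) :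
    ∀ a ∈ (fun γ => x⁻¹ * γ * x) '' (H : Set G), ∀ b ∈ (fun γ => x⁻¹ * γ * x) '' (H : Set G),
      a⁻¹ * b ∈ U → a = b := by
  rintro _ ⟨γ, hγ, rfl⟩ _ ⟨δ, hδ, rfl⟩ hU
  have hconj : (x⁻¹ * γ * x)⁻¹ * (x⁻¹ * δ * x) ∈ (fun γ => x⁻¹ * γ * x) '' (H : Set G) :=
    ⟨γ⁻¹ * δ, H.mul_mem (H.inv_mem hγ) hδ, by group⟩
  have hone : (x⁻¹ * γ * x)⁻¹ * (x⁻¹ * δ * x) = 1 := by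
    rw [← Set.mem_singleton_iff, ← hHU]
    exact ⟨hconj, hU⟩
  exact inv_mul_eq_one.1 hone

end

theorem stmt1_general {G : Type*} [Group G] [TopologicalSpace G] [IsTopologicalGroup G]
    (Γ : ℕ → Subgroup G)
    (hud : ∃ U ∈ nhds (1 : G), ∀ (n : ℕ) (x : G),
      ((fun γ => x⁻¹ * γ * x) '' ((Γ n : Set G))) ∩ U = {1})
    (C : Set G) (hC : IsCompact C) :
    ∃ r : ℕ, ∀ (n : ℕ) (x : G),
      (((fun γ => x⁻¹ * γ * x) '' ((Γ n : Set G) \ {1})) ∩ C).encard ≤ (r : ℕ∞) := by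
  obtain ⟨U, hU, hΓU⟩ := hud
  obtain ⟨r, hr⟩ := exists_forall_encard_inter_le_of_separated hU hC
  refine ⟨r, fun n x => le_trans (Set.encard_le_encard ?_)
    (hr _ (conj_image_subgroup_separated (Γ n) x (hΓU n x)))⟩
  exact Set.inter_subset_inter_left C (Set.image_mono Set.sdiff_subset)

/-- Lemma 2.4 of the paper.  Let `G` be a locally compact Hausdorff
topological group and `(Γₙ)` a uniformly discrete sequence of cocompact lattices in `G`
(discrete subgroups with compact quotient `Γₙ\G`).  Then for every compact `C ⊆ G`
there is `r ∈ ℕ` with `#(x⁻¹Γₙ* x ∩ C) ≤ r` for all `n` and all `x ∈ G`. -/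
theorem stmt1 {G : Type*} [Group G] [TopologicalSpace G] [IsTopologicalGroup G]
    [LocallyCompactSpace G] [T2Space G]
    (Γ : ℕ → Subgroup G)
    (hdisc : ∀ n, DiscreteTopology ↥(Γ n))
    (hcocpt : ∀ n, CompactSpace (Quotient (QuotientGroup.rightRel (Γ n))))
    (hud : ∃ U ∈ nhds (1 : G), ∀ (n : ℕ) (x : G),
      ((fun γ => x⁻¹ * γ * x) '' ((Γ n : Set G))) ∩ U = {1})
    (C : Set G) (hC : IsCompact C) :
    ∃ r : ℕ, ∀ (n : ℕ) (x : G),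
      (((fun γ => x⁻¹ * γ * x) '' ((Γ n : Set G) \ {1})) ∩ C).encard ≤ (r : ℕ∞) :=
  stmt1_general Γ hud C hC
end

section
/- Let G be a locally compact Hausdorff topological group and let (Γₙ) be a uniformly discrete sequence of cocompact lattices in G. Then the following are equivalent: (a) (Γₙ) is BS-convergent to {1}, i.e., for every compact set C ⊆ G, P_{Γₙ\G}({x ∈ Γₙ\G : x⁻¹Γₙ* x ∩ C ≠ ∅}) → 0 as n → ∞; (b) for every compact set C ⊆ G, ∫_{Γₙ\G} #(x⁻¹Γₙ* x ∩ C) dP_{Γₙ\G}(x) → 0 as n → ∞ (the condition characterizing (Γₙ) being a Plancherel sequence). -/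
open MeasureTheory Filter Topology Set Pointwise
open scoped ENNReal

/-!
`P(bad cosets) ≤ ∫ #(x⁻¹Γ*x ∩ C) ≤ N · P(bad cosets)`: the count is `≥ 1` exactly on the bad
cosets, and uniform discreteness bounds it by a constant `N` depending only on `C`, since a
`U`-separated set meets `C` in at most as many points as there are translates `gV`, `V⁻¹V ⊆ U`,
needed to cover `C`. For the lower bound the bad set must be measurable: upstairs it is the
locally finite union of the closed sets `{x | x⁻¹γx ∈ C}`, `γ ∈ Γ*`.
-/

def rightTranslate {G : Type*} [Group G] (Γ : Subgroup G) (g : G) :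
    Quotient (QuotientGroup.rightRel Γ) → Quotient (QuotientGroup.rightRel Γ) :=
  Quotient.map' (fun x => x * g) (by
    intro a b h
    rw [QuotientGroup.rightRel_apply] at h ⊢
    have e : (b * g) * (a * g)⁻¹ = b * a⁻¹ := by group
    rw [e]; exact h)

section

variable {G : Type*} [Group G]

def conjImage (x : G) (S : Set G) : Set G :=
  (fun γ => x⁻¹ * γ * x) '' S

lemma separated_of_inter_eq_one {S U : Set G} (hS : ∀ a ∈ S, ∀ b ∈ S, a⁻¹ * b ∈ S)
    (h : S ∩ U = {1}) : ∀ a ∈ S, ∀ b ∈ S, a⁻¹ * b ∈ U → a = b :=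
  fun a ha b hb hab => inv_mul_eq_one.1 (h.subset ⟨hS a ha b hb, hab⟩)

lemma inv_mul_mem_conjImage (H : Subgroup G) (x : G) :
    ∀ a ∈ conjImage x H, ∀ b ∈ conjImage x H, a⁻¹ * b ∈ conjImage x H := by
  rintro _ ⟨γ, hγ, rfl⟩ _ ⟨δ, hδ, rfl⟩
  exact ⟨γ⁻¹ * δ, mul_mem (inv_mem hγ) hδ, by group⟩

lemma conjImage_mul_left {Γ : Subgroup G} {γ₀ : G} (hγ₀ : γ₀ ∈ Γ) (x : G) :
    conjImage (γ₀ * x) ((Γ : Set G) \ {1}) = conjImage x ((Γ : Set G) \ {1}) := by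
  ext a
  simp only [conjImage, mem_image, Set.mem_sdiff, SetLike.mem_coe, mem_singleton_iff]
  constructor
  · rintro ⟨γ, ⟨hγ, hγ1⟩, rfl⟩
    refine ⟨γ₀⁻¹ * γ * γ₀, ⟨mul_mem (mul_mem (inv_mem hγ₀) hγ) hγ₀, ?_⟩, by group⟩
    simpa using (conj_eq_one_iff (a := γ₀⁻¹)).not.2 hγ1
  · rintro ⟨γ, ⟨hγ, hγ1⟩, rfl⟩
    refine ⟨γ₀ * γ * γ₀⁻¹, ⟨mul_mem (mul_mem hγ₀ hγ) (inv_mem hγ₀), ?_⟩, by group⟩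
    simpa using hγ1

lemma conjImage_eq_of_rightRel {Γ : Subgroup G} {x y : G} (h : QuotientGroup.rightRel Γ x y) :
    conjImage x ((Γ : Set G) \ {1}) = conjImage y ((Γ : Set G) \ {1}) := by
  rw [QuotientGroup.rightRel_apply] at h
  rw [← conjImage_mul_left h x, inv_mul_cancel_right]

noncomputable def conjCount (Γ : Subgroup G) (C : Set G) :
    Quotient (QuotientGroup.rightRel Γ) → ℝ≥0∞ :=
  Quotient.lift (fun x => ((conjImage x ((Γ : Set G) \ {1}) ∩ C).encard : ℝ≥0∞))
    fun _ _ h => by rw [conjImage_eq_of_rightRel h]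

lemma conjCount_mk (Γ : Subgroup G) (C : Set G) (x : G) :
    conjCount Γ C (Quotient.mk'' x) = ((conjImage x ((Γ : Set G) \ {1}) ∩ C).encard : ℝ≥0∞) :=
  rfl

def cosetsMeeting (Γ : Subgroup G) (C : Set G) : Set (Quotient (QuotientGroup.rightRel Γ)) :=
  {q | ∃ x : G, Quotient.mk'' x = q ∧ (conjImage x ((Γ : Set G) \ {1}) ∩ C).Nonempty}

lemma mk_preimage_cosetsMeeting (Γ : Subgroup G) (C : Set G) :
    Quotient.mk'' ⁻¹' cosetsMeeting Γ C =
      {x | (conjImage x ((Γ : Set G) \ {1}) ∩ C).Nonempty} := by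
  ext x
  refine ⟨fun ⟨y, hy, hne⟩ => ?_, fun hne => ⟨x, rfl, hne⟩⟩
  rwa [conjImage_eq_of_rightRel (Quotient.exact hy)] at hne

lemma lintegral_conjCount_le {Γ : Subgroup G} {C : Set G} [MeasurableSpace G]
    (μ : Measure (Quotient (QuotientGroup.rightRel Γ))) {N : ℕ}
    (hN : ∀ x, (conjImage x ((Γ : Set G) \ {1}) ∩ C).encard ≤ N) :
    ∫⁻ q, conjCount Γ C q ∂μ ≤ N * μ (cosetsMeeting Γ C) := by
  refine (lintegral_mono fun q => ?_).trans (lintegral_indicator_const_le _ _)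
  induction q using Quotient.inductionOn' with
  | h x =>
    rcases eq_empty_or_nonempty (conjImage x ((Γ : Set G) \ {1}) ∩ C) with he | hne
    · simp [conjCount_mk, he]
    · rw [indicator_of_mem (show Quotient.mk'' x ∈ cosetsMeeting Γ C from ⟨x, rfl, hne⟩),
        conjCount_mk]
      simpa using ENat.toENNReal_le.2 (hN x)

end

section

variable {G : Type*} [Group G] [TopologicalSpace G] [IsTopologicalGroup G]

lemma exists_encard_inter_le_of_separated {U D : Set G} (hU : U ∈ 𝓝 1) (hD : IsCompact D) :
    ∃ N : ℕ, ∀ S : Set G, (∀ a ∈ S, ∀ b ∈ S, a⁻¹ * b ∈ U → a = b) → (S ∩ D).encard ≤ N := by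
  obtain ⟨V, hV, -, hVinv, hVU⟩ := exists_closed_nhds_one_inv_eq_mul_subset hU
  obtain ⟨t, ht⟩ :=
    compact_covered_by_mul_left_translates hD ⟨1, mem_interior_iff_mem_nhds.2 hV⟩
  refine ⟨t.card, fun S hS => ?_⟩
  have hpiece : ∀ g, (S ∩ (g * ·) ⁻¹' V).encard ≤ 1 := fun g =>
    encard_le_one_iff.2 fun a b ha hb => hS a ha.1 b hb.1 <| hVU <| by
      rw [show a⁻¹ * b = (g * a)⁻¹ * (g * b) by group]
      exact mul_mem_mul (hVinv ▸ inv_mem_inv.2 ha.2) hb.2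
  calc (S ∩ D).encard ≤ (⋃ g ∈ t, S ∩ (g * ·) ⁻¹' V).encard := by
        rw [← inter_iUnion₂]
        exact encard_mono (inter_subset_inter_right S ht)
    _ ≤ ∑ g ∈ t, (S ∩ (g * ·) ⁻¹' V).encard := t.set_encard_biUnion_le _
    _ ≤ ∑ _g ∈ t, 1 := Finset.sum_le_sum fun g _ => hpiece g
    _ = t.card := by simp

lemma exists_encard_conjImage_inter_le {U D : Set G} (hU : U ∈ 𝓝 1) (hD : IsCompact D) :
    ∃ N : ℕ, ∀ (H : Subgroup G) (x : G), conjImage x H ∩ U = {1} →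
      (conjImage x ((H : Set G) \ {1}) ∩ D).encard ≤ N := by
  obtain ⟨N, hN⟩ := exists_encard_inter_le_of_separated hU hD
  refine ⟨N, fun H x hsep => (encard_mono ?_).trans
    (hN _ (separated_of_inter_eq_one (inv_mul_mem_conjImage H x) hsep))⟩
  exact inter_subset_inter_left D (image_mono sdiff_subset)

lemma isClosed_setOf_conjImage_inter_nonempty [LocallyCompactSpace G] [T2Space G]
    {U C : Set G} (hU : U ∈ 𝓝 1) {Γ : Subgroup G} (hΓ : (Γ : Set G) ∩ U = {1})
    (hC : IsCompact C) :
    IsClosed {x | (conjImage x ((Γ : Set G) \ {1}) ∩ C).Nonempty} := by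
  have hfin : ∀ D, IsCompact D → ((Γ : Set G) \ {1} ∩ D).Finite := fun D hD => by
    obtain ⟨N, hN⟩ := exists_encard_inter_le_of_separated hU hD
    exact finite_of_encard_le_coe ((encard_mono (inter_subset_inter_left D sdiff_subset)).trans
      (hN _ (separated_of_inter_eq_one (fun a ha b hb => mul_mem (inv_mem ha) hb) hΓ)))
  have hlf : LocallyFinite fun γ : ↥((Γ : Set G) \ {1}) => {x : G | x⁻¹ * γ * x ∈ C} := by
    intro x₀
    obtain ⟨K, hK, hKx₀⟩ := exists_compact_mem_nhds x₀
    refine ⟨K, hKx₀, ((hfin _ ((hK.mul hC).mul hK.inv)).preimage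
      Subtype.val_injective.injOn).subset ?_⟩
    rintro γ ⟨x, hxC, hxK⟩
    refine ⟨γ.2, ?_⟩
    rw [show (γ : G) = x * (x⁻¹ * γ * x) * x⁻¹ by group]
    exact mul_mem_mul (mul_mem_mul hxK hxC) (inv_mem_inv.2 hxK)
  have hunion : {x | (conjImage x ((Γ : Set G) \ {1}) ∩ C).Nonempty}
      = ⋃ γ : ↥((Γ : Set G) \ {1}), {x : G | x⁻¹ * γ * x ∈ C} := by
    ext x
    simp [conjImage, Set.Nonempty]
  rw [hunion]
  exact hlf.isClosed_iUnion fun γ => hC.isClosed.preimage (by fun_prop)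

lemma measure_cosetsMeeting_le_lintegral_conjCount [LocallyCompactSpace G] [T2Space G]
    [MeasurableSpace G] [BorelSpace G] {U C : Set G} (hU : U ∈ 𝓝 1) {Γ : Subgroup G}
    (hΓ : (Γ : Set G) ∩ U = {1}) (hC : IsCompact C)
    (μ : Measure (Quotient (QuotientGroup.rightRel Γ))) :
    μ (cosetsMeeting Γ C) ≤ ∫⁻ q, conjCount Γ C q ∂μ := by
  have hmeas : MeasurableSet (cosetsMeeting Γ C) := by
    rw [measurableSet_quotient, mk_preimage_cosetsMeeting]
    exact (isClosed_setOf_conjImage_inter_nonempty hU hΓ hC).measurableSet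
  rw [← lintegral_indicator_one hmeas]
  refine lintegral_mono (indicator_le fun q ⟨x, hx, hne⟩ => ?_)
  rw [← hx, conjCount_mk, Pi.one_apply]
  exact_mod_cast one_le_encard_iff_nonempty.2 hne

end

theorem stmt2_general {G : Type*} [Group G] [TopologicalSpace G] [IsTopologicalGroup G]
    [LocallyCompactSpace G] [T2Space G] [MeasurableSpace G] [BorelSpace G]
    (Γ : ℕ → Subgroup G)
    (hud : ∃ U ∈ nhds (1 : G), ∀ (n : ℕ) (x : G),
      ((fun γ => x⁻¹ * γ * x) '' ((Γ n : Set G))) ∩ U = {1})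
    (P : ∀ n : ℕ, Measure (Quotient (QuotientGroup.rightRel (Γ n)))) :
    (∀ C : Set G, IsCompact C →
      Tendsto (fun n => P n {q | ∃ x : G, Quotient.mk'' x = q ∧
          (((fun γ => x⁻¹ * γ * x) '' ((Γ n : Set G) \ {1})) ∩ C).Nonempty})
        atTop (𝓝 0))
    ↔
    (∀ C : Set G, IsCompact C →
      ∀ F : (n : ℕ) → Quotient (QuotientGroup.rightRel (Γ n)) → ℝ≥0∞,
        (∀ (n : ℕ) (x : G), F n (Quotient.mk'' x) =
          ((((fun γ => x⁻¹ * γ * x) '' ((Γ n : Set G) \ {1})) ∩ C).encard : ℝ≥0∞)) →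
        Tendsto (fun n => ∫⁻ q, F n q ∂(P n)) atTop (𝓝 0)) := by
  obtain ⟨U, hU, hsep⟩ := hud
  have hΓ : ∀ n, (Γ n : Set G) ∩ U = {1} := fun n => by simpa using hsep n 1
  constructor
  · intro h C hC F hF
    obtain ⟨N, hN⟩ := exists_encard_conjImage_inter_le hU hC
    have hFcount : ∀ n, F n = conjCount (Γ n) C := fun n =>
      funext fun q => Quotient.inductionOn' q (hF n)
    have hbound : ∀ n, ∫⁻ q, F n q ∂P n ≤ N * P n (cosetsMeeting (Γ n) C) := fun n =>
      hFcount n ▸ lintegral_conjCount_le (P n) fun x => hN (Γ n) x (hsep n x)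
    have hlim := ENNReal.Tendsto.const_mul (h C hC) (Or.inr (ENNReal.natCast_ne_top N))
    rw [mul_zero] at hlim
    exact tendsto_of_tendsto_of_tendsto_of_le_of_le tendsto_const_nhds hlim
      (fun n => zero_le) hbound
  · intro h C hC
    exact tendsto_of_tendsto_of_tendsto_of_le_of_le tendsto_const_nhds
      (h C hC (fun n => conjCount (Γ n) C) fun n x => rfl) (fun n => zero_le)
      fun n => measure_cosetsMeeting_le_lintegral_conjCount hU (hΓ n) hC (P n)

/-- Theorem of Section 2.  Let `G` be a locally compact Hausdorff
topological group, `(Γₙ)` a uniformly discrete sequence of cocompact lattices, and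
`P n` the invariant Borel probability measure on `Γₙ\G`.  Then `(Γₙ)` is BS-convergent
to `{1}` (condition (a)) iff for every compact `C ⊆ G` the integrals
`∫_{Γₙ\G} #(x⁻¹Γₙ* x ∩ C) dP_{Γₙ\G}(x)` tend to `0` (condition (b), characterizing
Plancherel sequences). -/
theorem stmt2 {G : Type*} [Group G] [TopologicalSpace G] [IsTopologicalGroup G]
    [LocallyCompactSpace G] [T2Space G] [MeasurableSpace G] [BorelSpace G]
    (Γ : ℕ → Subgroup G)
    (hdisc : ∀ n, DiscreteTopology ↥(Γ n))
    (hcocpt : ∀ n, CompactSpace (Quotient (QuotientGroup.rightRel (Γ n))))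
    (hud : ∃ U ∈ nhds (1 : G), ∀ (n : ℕ) (x : G),
      ((fun γ => x⁻¹ * γ * x) '' ((Γ n : Set G))) ∩ U = {1})
    (P : ∀ n : ℕ, Measure (Quotient (QuotientGroup.rightRel (Γ n))))
    (hP : ∀ n, IsProbabilityMeasure (P n))
    (hPinv : ∀ (n : ℕ) (g : G), MeasurePreserving (rightTranslate (Γ n) g) (P n) (P n)) :
    (∀ C : Set G, IsCompact C →
      Tendsto (fun n => P n {q | ∃ x : G, Quotient.mk'' x = q ∧
          (((fun γ => x⁻¹ * γ * x) '' ((Γ n : Set G) \ {1})) ∩ C).Nonempty})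
        atTop (𝓝 0))
    ↔
    (∀ C : Set G, IsCompact C →
      ∀ F : (n : ℕ) → Quotient (QuotientGroup.rightRel (Γ n)) → ℝ≥0∞,
        (∀ (n : ℕ) (x : G), F n (Quotient.mk'' x) =
          ((((fun γ => x⁻¹ * γ * x) '' ((Γ n : Set G) \ {1})) ∩ C).encard : ℝ≥0∞)) →
        Tendsto (fun n => ∫⁻ q, F n q ∂(P n)) atTop (𝓝 0)) :=
  stmt2_general Γ hud P
end

section
/- Let G be a group, K ⊆ G a subgroup, and Γ ⊆ G a subgroup such that no element of Γ ∖ {1} is conjugate in G to an element of K. Let U ⊆ G be any subset and x ∈ G. Then x⁻¹(Γ ∖ {1})x ∩ U·K·U⁻¹ ≠ ∅ if and only if there exist u₁, u₂ ∈ U with u₁K ≠ u₂K and Γxu₁K = Γxu₂K (equality of subsets of G). -/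
/-- group-theoretic core of Proposition 2.4.  Let `K, Γ ≤ G` with no
element of `Γ ∖ {1}` conjugate in `G` to an element of `K`.  For any `U ⊆ G` and
`x ∈ G`: `x⁻¹(Γ∖{1})x ∩ U·K·U⁻¹ ≠ ∅` iff there are `u₁, u₂ ∈ U` with `u₁K ≠ u₂K`
and `Γxu₁K = Γxu₂K`. -/
theorem stmt5 {G : Type*} [Group G] (K Γ : Subgroup G)
    (h : ∀ γ ∈ Γ, γ ≠ 1 → ∀ g : G, g⁻¹ * γ * g ∉ K)
    (U : Set G) (x : G) :
    (((fun γ => x⁻¹ * γ * x) '' ((Γ : Set G) \ {1})) ∩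
        {g | ∃ u₁ ∈ U, ∃ k ∈ K, ∃ u₂ ∈ U, g = u₁ * k * u₂⁻¹}).Nonempty ↔
      ∃ u₁ ∈ U, ∃ u₂ ∈ U,
        ({g : G | ∃ k ∈ K, g = u₁ * k} ≠ {g : G | ∃ k ∈ K, g = u₂ * k}) ∧
        ({g : G | ∃ γ ∈ Γ, ∃ k ∈ K, g = γ * (x * u₁) * k} =
          {g : G | ∃ γ ∈ Γ, ∃ k ∈ K, g = γ * (x * u₂) * k}) := by
  constructor
  · rintro ⟨g, ⟨γ, ⟨hγ, hγ1⟩, rfl⟩, u₁, hu₁, k, hk, u₂, hu₂, heq⟩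
    simp only [Set.mem_singleton_iff] at hγ1
    have hγe : γ = x * (u₁ * k * u₂⁻¹) * x⁻¹ := by rw [← heq]; group
    refine ⟨u₁, hu₁, u₂, hu₂, ?_, ?_⟩
    · intro hc
      have h1 : u₁ ∈ {g : G | ∃ k ∈ K, g = u₁ * k} := ⟨1, one_mem K, by simp⟩
      rw [hc] at h1
      obtain ⟨k', hk', hk'e⟩ := h1
      apply h γ hγ hγ1 (x * u₂)
      have : (x * u₂)⁻¹ * γ * (x * u₂) = k' * k := by
        rw [hγe, hk'e]; group
      rw [this]; exact mul_mem hk' hk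
    · ext g
      simp only [Set.mem_setOf_eq]
      constructor
      · rintro ⟨γ', hγ', k', hk', rfl⟩
        exact ⟨γ' * γ, mul_mem hγ' hγ, k⁻¹ * k', mul_mem (inv_mem hk) hk',
          by rw [hγe]; group⟩
      · rintro ⟨γ', hγ', k', hk', rfl⟩
        exact ⟨γ' * γ⁻¹, mul_mem hγ' (inv_mem hγ), k * k', mul_mem hk hk',
          by rw [hγe]; group⟩
  · rintro ⟨u₁, hu₁, u₂, hu₂, hne, hset⟩
    have h1 : x * u₁ ∈ {g : G | ∃ γ ∈ Γ, ∃ k ∈ K, g = γ * (x * u₁) * k} :=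
      ⟨1, one_mem Γ, 1, one_mem K, by simp⟩
    rw [hset] at h1
    obtain ⟨γ, hγ, k, hk, he⟩ := h1
    have hγ1 : γ ≠ 1 := by
      rintro rfl
      apply hne
      have hu : u₁ = u₂ * k := by
        rw [one_mul] at he
        exact mul_left_cancel (a := x) (by rw [he]; group)
      ext g
      simp only [Set.mem_setOf_eq]
      constructor
      · rintro ⟨k', hk', rfl⟩
        exact ⟨k * k', mul_mem hk hk', by rw [hu]; group⟩
      · rintro ⟨k', hk', rfl⟩
        exact ⟨k⁻¹ * k', mul_mem (inv_mem hk) hk', by rw [hu]; group⟩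
    refine ⟨x⁻¹ * γ * x, ⟨γ, ⟨hγ, hγ1⟩, rfl⟩, u₁, hu₁, k⁻¹, inv_mem hk, u₂, hu₂, ?_⟩
    -- x u₁ = γ x u₂ k  ⇒  x⁻¹ γ x = u₁ k⁻¹ u₂⁻¹
    have : γ = x * u₁ * k⁻¹ * u₂⁻¹ * x⁻¹ := by rw [he]; group
    rw [this]; group
end

section
/- Let G be a locally compact Hausdorff topological group with a Haar measure and let Γ ⊆ G be a discrete subgroup. Then there exists a fundamental domain for Γ, i.e., an open set F ⊆ G such that: (i) F ∩ γF = ∅ for every γ ∈ Γ ∖ {1}; (ii) Γ·cl(F) = G, where cl(F) denotes the topological closure of F; (iii) for every compact set C ⊆ G, the set C ∩ Γ·(cl(F) ∖ F) has Haar measure zero. -/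
/-!
Call an open set `O ⊆ G` a patch if its closure is compact, its frontier is null and it is disjoint
from its translates `γ • O`, `γ ∈ Γ \ {1}`. Since `Γ` is discrete, every point has arbitrarily
small patches around it (frontiers inside null level sets of Urysohn functions).

`G` is covered by a family of patches whose saturated closures `Γ * closure O` form a locally
finite family: `G` is the disjoint union of the open `Γ`-invariant double cosets `Γ a H`, where `H`
is the open subgroup generated by a compact symmetric neighbourhood `K` of `1`, and each of them is
covered stage by stage along the compact layers `a • K ^ n`, the patches of stage `n` keeping away
from the layers before `n - 1`.

Well-order the family and cut from each patch the saturated closures of the earlier ones. The union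
`F` of the remaining pieces is disjoint from its nontrivial translates; every point lies in the
saturated closure of the first patch whose saturated closure contains it; and `closure F \ F` lies
in the union of the saturated frontiers, which is null on compact sets because the family is
locally finite and a compact set meets only finitely many translates of a compact set.
-/

open MeasureTheory Set Filter Topology
open scoped Pointwise

section LocallyNull

variable {X : Type*} [TopologicalSpace X] [MeasurableSpace X]

def IsLocallyNull (μ : Measure X) (s : Set X) : Prop :=
  ∀ C, IsCompact C → μ (C ∩ s) = 0

variable {μ : Measure X}

theorem IsLocallyNull.mono {s t : Set X} (ht : IsLocallyNull μ t) (hst : s ⊆ t) :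
    IsLocallyNull μ s :=
  fun C hC => measure_mono_null (inter_subset_inter_right C hst) (ht C hC)

theorem LocallyFinite.isLocallyNull_iUnion {ι : Type*} {s : ι → Set X} (hs : LocallyFinite s)
    (h : ∀ i, IsLocallyNull μ (s i)) : IsLocallyNull μ (⋃ i, s i) := by
  intro C hC
  have hsub : C ∩ (⋃ i, s i) ⊆ ⋃ i ∈ {i | (s i ∩ C).Nonempty}, C ∩ s i := by
    rintro x ⟨hxC, hx⟩
    obtain ⟨i, hi⟩ := mem_iUnion.1 hx
    exact mem_biUnion ⟨x, hi, hxC⟩ ⟨hxC, hi⟩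
  refine measure_mono_null hsub ?_
  exact (measure_biUnion_null_iff (hs.finite_nonempty_inter_compact hC).countable).2
    fun i _ => h i C hC

end LocallyNull

section NullFrontier

variable {X : Type*} [TopologicalSpace X] [RegularSpace X] [LocallyCompactSpace X]
  [MeasurableSpace X] [OpensMeasurableSpace X]

/-- Take a superlevel set `{f > t}` of an Urysohn function, at one of the all but countably many
levels `t` whose level set is null. -/
theorem exists_isOpen_mem_null_frontier (μ : Measure X) [IsFiniteMeasureOnCompacts μ] {x : X}
    {U : Set X} (hU : U ∈ 𝓝 x) :
    ∃ O, IsOpen O ∧ x ∈ O ∧ IsCompact (closure O) ∧ closure O ⊆ U ∧ μ (frontier O) = 0 := by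
  obtain ⟨f, hfx, hfU, hfc, -⟩ := exists_continuous_one_zero_of_isCompact isCompact_singleton
    isOpen_interior.isClosed_compl (disjoint_compl_right_iff_subset.2
      (singleton_subset_iff.2 (mem_interior_iff_mem_nhds.2 hU)))
  have hlevels : {t : ℝ | 0 < μ.restrict (tsupport f) {y | f y = t}}.Countable :=
    have : IsFiniteMeasure (μ.restrict (tsupport f)) :=
      ⟨by simpa using hfc.isCompact.measure_lt_top⟩
    Measure.countable_meas_level_set_pos f.continuous.measurable
  obtain ⟨t, ht, ht01⟩ := (hlevels.dense_compl ℝ).exists_between zero_lt_one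
  have hsupp : {y | t ≤ f y} ⊆ tsupport f := fun y hy =>
    subset_tsupport f (ne_of_gt (ht01.1.trans_le hy))
  have hclosure : closure (f ⁻¹' Ioi t) ⊆ {y | t ≤ f y} :=
    closure_minimal (fun y (hy : t < f y) => hy.le) (isClosed_le continuous_const f.continuous)
  refine ⟨f ⁻¹' Ioi t, isOpen_Ioi.preimage f.continuous, ?_, ?_, ?_, ?_⟩
  · simpa [hfx rfl] using ht01.2
  · exact hfc.isCompact.of_isClosed_subset isClosed_closure (hclosure.trans hsupp)
  · intro y hy
    by_contra hyU
    have : f y = 0 := hfU fun h => hyU (interior_subset h)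
    exact (ht01.1.trans_le (hclosure hy)).ne' this
  · have hfrontier : frontier (f ⁻¹' Ioi t) ⊆ f ⁻¹' {t} := by
      simpa using f.continuous.frontier_preimage_subset (Ioi t)
    refine measure_mono_null hfrontier ?_
    have hmeas : MeasurableSet (f ⁻¹' {t}) :=
      (measurableSet_singleton t).preimage f.continuous.measurable
    have : ¬0 < μ.restrict (tsupport f) (f ⁻¹' {t}) := ht
    rwa [not_lt, nonpos_iff_eq_zero, Measure.restrict_apply hmeas,
      inter_eq_left.2 (show f ⁻¹' {t} ⊆ tsupport f from fun y hy => hsupp (hy : f y = t).ge)]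
      at this

end NullFrontier

section Saturation

variable {G : Type*} [Group G] {Γ : Subgroup G}

theorem Subgroup.mul_mem_coe_mul_iff {γ x : G} (hγ : γ ∈ Γ) {s : Set G} :
    γ * x ∈ (Γ : Set G) * s ↔ x ∈ (Γ : Set G) * s := by
  simp only [Set.mem_mul]
  refine ⟨fun ⟨δ, hδ, y, hy, hxy⟩ => ⟨γ⁻¹ * δ, Γ.mul_mem (Γ.inv_mem hγ) hδ, y, hy, ?_⟩,
    fun ⟨δ, hδ, y, hy, hxy⟩ => ⟨γ * δ, Γ.mul_mem hγ hδ, y, hy, ?_⟩⟩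
  · rw [mul_assoc, hxy, inv_mul_cancel_left]
  · rw [mul_assoc, hxy]

theorem Subgroup.coe_mul_coe_mul (s : Set G) :
    (Γ : Set G) * ((Γ : Set G) * s) = (Γ : Set G) * s := by
  rw [← mul_assoc, coe_mul_coe]

theorem Subgroup.disjoint_coe_mul_comm {s t : Set G} :
    Disjoint ((Γ : Set G) * s) t ↔ Disjoint s ((Γ : Set G) * t) := by
  simp only [Set.disjoint_left, Set.mem_mul]
  refine ⟨fun h x hx ⟨γ, hγ, y, hy, hxy⟩ => h ⟨γ⁻¹, Γ.inv_mem hγ, x, hx, ?_⟩ hy,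
    fun h x ⟨γ, hγ, y, hy, hxy⟩ hx => h hy ⟨γ⁻¹, Γ.inv_mem hγ, x, hx, ?_⟩⟩
  · rw [← hxy, inv_mul_cancel_left]
  · rw [← hxy, inv_mul_cancel_left]

end Saturation

section DiscreteSubgroup

variable {G : Type*} [Group G] [TopologicalSpace G] [IsTopologicalGroup G] {Γ : Subgroup G}

theorem Subgroup.exists_nhds_disjoint_smul [DiscreteTopology Γ] (g : G) :
    ∃ W ∈ 𝓝 g, ∀ γ ∈ Γ, γ ≠ 1 → Disjoint W (γ • W) := by
  obtain ⟨V, hV, hVΓ⟩ := nhds_inter_eq_singleton_of_mem_discrete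
    (isDiscrete_iff_discreteTopology.2 ‹_›) Γ.one_mem
  have hdiv : Tendsto (fun p : G × G => p.1 * p.2⁻¹) (𝓝 g ×ˢ 𝓝 g) (𝓝 1) := by
    rw [← nhds_prod_eq]
    exact (continuous_fst.mul continuous_snd.inv).tendsto' (g, g) 1 (mul_inv_cancel g)
  obtain ⟨W, hW, hWW⟩ := mem_prod_self_iff.1 (hdiv hV)
  refine ⟨W, hW, fun γ hγ hγ1 => Set.disjoint_left.2 fun x hx ⟨w, hw, hwx⟩ => hγ1 ?_⟩
  have hγV : γ ∈ V := by simpa [← hwx] using hWW (mk_mem_prod hx hw)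
  simpa using hVΓ.subset ⟨hγV, hγ⟩

variable [T2Space G]

theorem Subgroup.finite_inter_of_isCompact [DiscreteTopology Γ] {C : Set G} (hC : IsCompact C) :
    ((Γ : Set G) ∩ C).Finite :=
  (hC.inter_left Subgroup.isClosed_of_discrete).finite
    ((isDiscrete_iff_discreteTopology.2 ‹_›).mono inter_subset_left)

/-- `C ∩ Γ * s` lies in the finitely many null translates `γ • s` with `γ ∈ Γ ∩ C * L⁻¹`. -/
theorem Subgroup.isLocallyNull_coe_mul [DiscreteTopology Γ] [MeasurableSpace G] [BorelSpace G]
    {μ : Measure G} [μ.IsMulLeftInvariant] {s L : Set G} (hL : IsCompact L) (hsL : s ⊆ L)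
    (hs : μ s = 0) : IsLocallyNull μ ((Γ : Set G) * s) := by
  intro C hC
  have hsub : C ∩ ((Γ : Set G) * s) ⊆ ⋃ γ ∈ (Γ : Set G) ∩ (C * L⁻¹), γ • s := by
    rintro _ ⟨hxC, γ, hγ, y, hy, rfl⟩
    exact mem_biUnion ⟨hγ, γ * y, hxC, y⁻¹, inv_mem_inv.2 (hsL hy), mul_inv_cancel_right γ y⟩
      (smul_mem_smul_set hy)
  refine measure_mono_null hsub ?_
  refine (measure_biUnion_null_iff (finite_inter_of_isCompact (hC.mul hL.inv)).countable).2 ?_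
  intro γ _
  rw [measure_smul, hs]

end DiscreteSubgroup

section Patches

variable {G : Type*} [Group G] [TopologicalSpace G] [IsTopologicalGroup G] [MeasurableSpace G]

structure IsPatch (μ : Measure G) (Γ : Subgroup G) (O : Set G) : Prop where
  isOpen : IsOpen O
  isCompact_closure : IsCompact (closure O)
  disjoint_smul : ∀ γ ∈ Γ, γ ≠ 1 → Disjoint O (γ • O)
  null_frontier : μ (frontier O) = 0

variable [LocallyCompactSpace G] [BorelSpace G] (μ : Measure G) [IsFiniteMeasureOnCompacts μ]
  (Γ : Subgroup G) [DiscreteTopology Γ]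

theorem exists_isPatch_subset {g : G} {N : Set G} (hN : N ∈ 𝓝 g) :
    ∃ O, IsPatch μ Γ O ∧ g ∈ O ∧ closure O ⊆ N := by
  obtain ⟨W, hW, hWΓ⟩ := Γ.exists_nhds_disjoint_smul g
  obtain ⟨O, hO, hgO, hOc, hOWN, hO0⟩ := exists_isOpen_mem_null_frontier μ (inter_mem hW hN)
  have hOW : O ⊆ W := subset_closure.trans (hOWN.trans inter_subset_left)
  refine ⟨O, ⟨hO, hOc, fun γ hγ hγ1 => ?_, hO0⟩, hgO, hOWN.trans inter_subset_right⟩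
  exact (hWΓ γ hγ hγ1).mono hOW (smul_set_mono hOW)

theorem exists_finset_isPatch_cover {D N : Set G} (hD : IsCompact D) (hN : IsOpen N)
    (hDN : D ⊆ N) :
    ∃ s : Finset (Set G), (∀ O ∈ s, IsPatch μ Γ O ∧ closure O ⊆ N) ∧ D ⊆ ⋃ O ∈ s, O := by
  classical
  choose! O hO hxO hON using fun x (hx : x ∈ D) => exists_isPatch_subset μ Γ (hN.mem_nhds (hDN hx))
  obtain ⟨t, htD, hDt⟩ := hD.elim_nhds_subcover O fun x hx => (hO x hx).isOpen.mem_nhds (hxO x hx)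
  refine ⟨t.image O, ?_, hDt.trans ?_⟩
  · simp only [Finset.mem_image, forall_exists_index, and_imp, forall_apply_eq_imp_iff₂]
    exact fun x hx => ⟨hO x (htD x hx), hON x (htD x hx)⟩
  · exact iUnion₂_subset fun x hx => subset_biUnion_of_mem (u := id) (Finset.mem_image_of_mem O hx)

end Patches

theorem subset_interior_of_lt {X : Type*} [TopologicalSpace X] {L : ℕ → Set X}
    (hL : ∀ n, L n ⊆ interior (L (n + 1))) {k n : ℕ} (hkn : k < n) : L k ⊆ interior (L n) :=
  (hL k).trans <| interior_mono <|
    monotone_nat_of_le_succ (fun n => (hL n).trans interior_subset) hkn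

section Exhaustion

variable {G : Type*} [Group G] [TopologicalSpace G] [IsTopologicalGroup G] [MeasurableSpace G]
  [LocallyCompactSpace G] [T2Space G] [BorelSpace G] (μ : Measure G) [IsFiniteMeasureOnCompacts μ]
  (Γ : Subgroup G) [DiscreteTopology Γ] {L : ℕ → Set G}

/-- The lag `k + 1 < n` is what leaves room for the patches: `L n` minus the open layers
`Γ * interior (L k)`, `k < n`, is already clear of `Γ * L k` for `k + 1 < n`. -/
theorem exists_isPatch_stage (hLc : ∀ n, IsCompact (L n)) (hL : ∀ n, L n ⊆ interior (L (n + 1)))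
    (n : ℕ) :
    ∃ s : Finset (Set G), (∀ O ∈ s, IsPatch μ Γ O ∧ closure O ⊆ (Γ : Set G) * L (n + 1) ∧
        ∀ k, k + 1 < n → Disjoint (closure O) ((Γ : Set G) * L k)) ∧
      L n \ (⋃ k < n, (Γ : Set G) * interior (L k)) ⊆ ⋃ O ∈ s, O := by
  set far := ⋃ k ∈ {k | k + 1 < n}, (Γ : Set G) * L k
  have hfar : IsClosed far :=
    ((finite_lt_nat n).subset fun k (hk : k + 1 < n) => (by omega : k < n)).isClosed_biUnion
      fun k _ => Subgroup.isClosed_of_discrete.mul_right_of_isCompact (hLc k)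
  have hnew : L n \ (⋃ k < n, (Γ : Set G) * interior (L k)) ⊆
      ((Γ : Set G) * interior (L (n + 1))) \ far := by
    rintro x ⟨hxn, hxint⟩
    refine ⟨subset_mul_right _ Γ.one_mem (hL n hxn), fun hxk => hxint ?_⟩
    obtain ⟨k, hk, hxk⟩ := mem_iUnion₂.1 hxk
    exact mem_biUnion (show k + 1 < n from hk)
      (mul_subset_mul_left (subset_interior_of_lt hL (Nat.lt_succ_self k)) hxk)
  obtain ⟨s, hs, hcov⟩ := exists_finset_isPatch_cover μ Γ
    ((hLc n).diff (isOpen_biUnion fun k _ => isOpen_interior.mul_left))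
    (isOpen_interior.mul_left.sdiff hfar) hnew
  refine ⟨s, fun O hO => ⟨(hs O hO).1, ?_, fun k hk => ?_⟩, hcov⟩
  · exact (hs O hO).2.trans (sdiff_subset.trans (mul_subset_mul_left interior_subset))
  · exact disjoint_left.2 fun x hx hxk => ((hs O hO).2 hx).2 (mem_biUnion hk hxk)

theorem exists_isPatch_cover_of_exhaustion (hLc : ∀ n, IsCompact (L n))
    (hL : ∀ n, L n ⊆ interior (L (n + 1))) :
    ∃ 𝒪 : Set (Set G),
      (∀ O ∈ 𝒪, IsPatch μ Γ O ∧ (Γ : Set G) * closure O ⊆ (Γ : Set G) * (⋃ n, L n)) ∧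
      (Γ : Set G) * (⋃ n, L n) ⊆ ⋃ O ∈ 𝒪, (Γ : Set G) * closure O ∧
      ∀ x ∈ (Γ : Set G) * (⋃ n, L n), ∃ U ∈ 𝓝 x, U ⊆ (Γ : Set G) * (⋃ n, L n) ∧
        {O ∈ 𝒪 | ((Γ : Set G) * closure O ∩ U).Nonempty}.Finite := by
  choose s hs hcov using exists_isPatch_stage μ Γ hLc hL
  set 𝒪 := ⋃ n, (s n : Set (Set G))
  have hmem : ∀ {n O}, O ∈ s n → O ∈ 𝒪 := fun hO => mem_iUnion.2 ⟨_, hO⟩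
  have hstage : ∀ n, (Γ : Set G) * L n ⊆ ⋃ O ∈ 𝒪, (Γ : Set G) * closure O := by
    intro n
    induction n using Nat.strong_induction_on with
    | _ n ih =>
      rintro _ ⟨γ, hγ, y, hy, rfl⟩
      by_cases hold : y ∈ ⋃ k < n, (Γ : Set G) * interior (L k)
      · obtain ⟨k, hk, δ, hδ, z, hz, rfl⟩ := mem_iUnion₂.1 hold
        exact ih k hk ⟨γ * δ, Γ.mul_mem hγ hδ, z, interior_subset hz, mul_assoc γ δ z⟩
      · obtain ⟨O, hO, hyO⟩ := mem_iUnion₂.1 (hcov n ⟨hy, hold⟩)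
        exact mem_biUnion (hmem hO) ⟨γ, hγ, y, subset_closure hyO, rfl⟩
  refine ⟨𝒪, ?_, by rw [mul_iUnion]; exact iUnion_subset hstage, ?_⟩
  · simp only [𝒪, mem_iUnion, Finset.mem_coe, forall_exists_index]
    refine fun O n hO => ⟨(hs n O hO).1, ?_⟩
    rw [← Γ.coe_mul_coe_mul (⋃ n, L n)]
    exact mul_subset_mul_left ((hs n O hO).2.1.trans
      (mul_subset_mul_left (subset_iUnion L (n + 1))))
  · rintro _ ⟨γ, hγ, y, hy, rfl⟩
    obtain ⟨m, hm⟩ := mem_iUnion.1 hy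
    refine ⟨(Γ : Set G) * interior (L (m + 1)), isOpen_interior.mul_left.mem_nhds
      ⟨γ, hγ, y, hL m hm, rfl⟩, mul_subset_mul_left (interior_subset.trans
        (subset_iUnion L (m + 1))), ?_⟩
    refine ((finite_Iic (m + 2)).biUnion fun n _ => (s n).finite_toSet).subset ?_
    rintro O ⟨hO, hmeet⟩
    obtain ⟨n, hO⟩ := mem_iUnion.1 hO
    refine mem_biUnion (mem_Iic.2 (not_lt.1 fun hn => ?_)) hO
    have hfar := Γ.disjoint_coe_mul_comm.2 <|
      ((hs n O hO).2.2 (m + 1) hn).mono_right (Γ.coe_mul_coe_mul (L (m + 1))).subset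
    exact hmeet.not_disjoint (hfar.mono_right (mul_subset_mul_left interior_subset))

end Exhaustion

section Blocks

variable {G : Type*} [Group G]

theorem Subgroup.coe_closure_eq_iUnion_pow {K : Set G} (hK : K⁻¹ = K) :
    (closure K : Set G) = ⋃ n, K ^ n := by
  refine subset_antisymm (fun x hx => ?_) (iUnion_subset fun n => ?_)
  · induction hx using closure_induction with
    | mem x hx => exact mem_iUnion.2 ⟨1, by rwa [pow_one]⟩
    | one => exact mem_iUnion.2 ⟨0, by rw [pow_zero]; rfl⟩
    | mul x y _ _ hx hy =>
      obtain ⟨m, hx⟩ := mem_iUnion.1 hx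
      obtain ⟨n, hy⟩ := mem_iUnion.1 hy
      exact mem_iUnion.2 ⟨m + n, by rw [pow_add]; exact mul_mem_mul hx hy⟩
    | inv x _ hx =>
      obtain ⟨n, hx⟩ := mem_iUnion.1 hx
      exact mem_iUnion.2 ⟨n, by rw [← hK, inv_pow]; exact inv_mem_inv.2 hx⟩
  · induction n with
    | zero => simp
    | succ n ih =>
      rw [pow_succ]
      exact (mul_subset_mul ih (subset_closure (k := K))).trans (coe_mul_coe _).subset

theorem coe_mul_iUnion_smul_pow_eq_doubleCoset {K : Set G} (hK : K⁻¹ = K) (Γ : Subgroup G)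
    (a : G) :
    (Γ : Set G) * ⋃ n, a • K ^ n = DoubleCoset.doubleCoset a Γ (Subgroup.closure K) := by
  rw [← smul_set_iUnion, ← Subgroup.coe_closure_eq_iUnion_pow hK, DoubleCoset.doubleCoset,
    mul_assoc, singleton_mul]
  rfl

variable [TopologicalSpace G] [IsTopologicalGroup G]

theorem IsCompact.pow {K : Set G} (hK : IsCompact K) (n : ℕ) : IsCompact (K ^ n) := by
  induction n with
  | zero => simp
  | succ n ih => rw [pow_succ]; exact ih.mul hK

theorem pow_subset_interior_pow_succ {K : Set G} (hK : K ∈ 𝓝 1) (n : ℕ) :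
    K ^ n ⊆ interior (K ^ (n + 1)) :=
  (subset_mul_left _ (mem_interior_iff_mem_nhds.2 hK)).trans <| interior_maximal
    ((mul_subset_mul_left interior_subset).trans (pow_succ K n).symm.subset)
    isOpen_interior.mul_left

theorem exists_isCompact_inv_eq_mem_nhds_one [LocallyCompactSpace G] :
    ∃ K : Set G, IsCompact K ∧ K⁻¹ = K ∧ K ∈ 𝓝 1 := by
  obtain ⟨K, hK, hK1⟩ := exists_compact_mem_nhds (1 : G)
  exact ⟨K ∪ K⁻¹, hK.union hK.inv, by rw [union_inv, inv_inv, union_comm],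
    mem_of_superset hK1 subset_union_left⟩

variable [MeasurableSpace G] [LocallyCompactSpace G] [T2Space G] [BorelSpace G] (μ : Measure G)
  [IsFiniteMeasureOnCompacts μ] (Γ : Subgroup G) [DiscreteTopology Γ]

theorem exists_locallyFinite_isPatch_cover :
    ∃ 𝒪 : Set (Set G), (∀ O ∈ 𝒪, IsPatch μ Γ O) ∧
      LocallyFinite (fun O : 𝒪 => (Γ : Set G) * closure O) ∧
      ⋃ O : 𝒪, (Γ : Set G) * closure O = univ := by
  obtain ⟨K, hKc, hKinv, hK1⟩ := exists_isCompact_inv_eq_mem_nhds_one (G := G)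
  set H := Subgroup.closure K
  choose 𝒪 h𝒪 hcov hlf using fun q : DoubleCoset.Quotient (Γ : Set G) (H : Set G) =>
    exists_isPatch_cover_of_exhaustion μ Γ (L := fun n => q.out • K ^ n)
      (fun n => (hKc.pow n).smul q.out)
      (fun n => by rw [interior_smul]; exact smul_set_mono (pow_subset_interior_pow_succ hK1 n))
  simp only [coe_mul_iUnion_smul_pow_eq_doubleCoset hKinv] at h𝒪 hcov hlf
  have hmem : ∀ x, x ∈ DoubleCoset.doubleCoset (DoubleCoset.mk Γ H x).out Γ H := fun x =>
    (DoubleCoset.mem_quotToDoubleCoset_iff _ x).2 rfl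
  refine ⟨⋃ q, 𝒪 q, fun O hO => ?_, fun x => ?_, eq_univ_of_forall fun x => ?_⟩
  · obtain ⟨q, hO⟩ := mem_iUnion.1 hO
    exact (h𝒪 q O hO).1
  · set q := DoubleCoset.mk Γ H x
    obtain ⟨U, hU, hUq, hfin⟩ := hlf q x (hmem x)
    refine ⟨U, hU, (hfin.preimage Subtype.val_injective.injOn).subset ?_⟩
    rintro ⟨O, hO⟩ hmeet
    obtain ⟨q', hO'⟩ := mem_iUnion.1 hO
    obtain rfl : q' = q := by
      by_contra hne
      obtain ⟨y, hyO, hyU⟩ := hmeet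
      exact disjoint_left.1 (DoubleCoset.disjoint_out hne) ((h𝒪 q' O hO').2 hyO) (hUq hyU)
    exact ⟨hO', hmeet⟩
  · obtain ⟨O, hO, hxO⟩ := mem_iUnion₂.1 (hcov _ (hmem x))
    exact mem_iUnion.2 ⟨⟨O, mem_iUnion.2 ⟨_, hO⟩⟩, hxO⟩

end Blocks

section Assembly

variable {G : Type*} [Group G] [TopologicalSpace G] [MeasurableSpace G] {μ : Measure G}
  {Γ : Subgroup G} {ι : Type*} (r : ι → ι → Prop) {O : ι → Set G}

def trimmedPatch (Γ : Subgroup G) (O : ι → Set G) (i : ι) : Set G :=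
  O i \ ⋃ (j) (_ : r j i), (Γ : Set G) * closure (O j)

theorem disjoint_iUnion_trimmedPatch_smul [Std.Trichotomous r] (hO : ∀ i, IsPatch μ Γ (O i))
    {γ : G} (hγ : γ ∈ Γ) (hγ1 : γ ≠ 1) :
    Disjoint (⋃ i, trimmedPatch r Γ O i) (γ • ⋃ i, trimmedPatch r Γ O i) := by
  have hPO : ∀ i, trimmedPatch r Γ O i ⊆ O i := fun i => sdiff_subset
  have hcut : ∀ {i k x}, r i k → x ∈ trimmedPatch r Γ O k → x ∉ (Γ : Set G) * closure (O i) :=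
    fun hik hx hxi => hx.2 (mem_biUnion hik hxi)
  rw [smul_set_iUnion]
  simp only [disjoint_iUnion_left, disjoint_iUnion_right]
  intro i k
  rcases trichotomous_of r i k with hik | rfl | hki
  · refine disjoint_left.2 fun x hxk ⟨y, hyi, hyx⟩ => hcut hik hxk ?_
    exact ⟨γ, hγ, y, subset_closure (hPO i hyi), hyx⟩
  · exact ((hO i).disjoint_smul γ hγ hγ1).mono (hPO i) (smul_set_mono (hPO i))
  · refine disjoint_left.2 fun x hxk ⟨y, hyi, hyx⟩ => hcut hki hyi ?_
    exact ⟨γ⁻¹, Γ.inv_mem hγ, x, subset_closure (hPO k hxk), by simp [← hyx]⟩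

variable [IsTopologicalGroup G]

theorem closure_trimmedPatch_diff_subset (hO : ∀ i, IsPatch μ Γ (O i)) (i : ι) :
    closure (trimmedPatch r Γ O i) \ trimmedPatch r Γ O i ⊆
      ⋃ j, (Γ : Set G) * frontier (O j) := by
  set A := ⋃ (j) (_ : r j i), (Γ : Set G) * closure (O j)
  rintro x ⟨hxc, hxP⟩
  by_cases hxO : x ∈ O i
  · have hxA : x ∈ A := not_not.1 fun h => hxP ⟨hxO, h⟩
    have hxint : x ∉ interior A := by
      have := closure_mono (show trimmedPatch r Γ O i ⊆ Aᶜ from fun z hz => hz.2) hxc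
      rwa [closure_compl] at this
    obtain ⟨j, hji, γ, hγ, y, hy, rfl⟩ := mem_iUnion₂.1 hxA
    refine mem_iUnion.2 ⟨j, γ, hγ, y, ?_, rfl⟩
    rw [(hO j).isOpen.frontier_eq]
    refine ⟨hy, fun hyO => hxint (interior_maximal ?_ (hO j).isOpen.mul_left ⟨γ, hγ, y, hyO, rfl⟩)⟩
    exact (mul_subset_mul_left subset_closure).trans (subset_biUnion_of_mem (u := fun j =>
      (Γ : Set G) * closure (O j)) hji)
  · refine mem_iUnion.2 ⟨i, subset_mul_right _ Γ.one_mem ?_⟩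
    rw [(hO i).isOpen.frontier_eq]
    exact ⟨closure_mono sdiff_subset hxc, hxO⟩

variable [T2Space G] [DiscreteTopology Γ]

theorem isClosed_iUnion_coe_mul_closure (hO : ∀ i, IsPatch μ Γ (O i))
    (hlf : LocallyFinite fun i => (Γ : Set G) * closure (O i)) (i : ι) :
    IsClosed (⋃ (j) (_ : r j i), (Γ : Set G) * closure (O j)) :=
  (hlf.subset fun _ => iUnion_subset fun _ => subset_rfl).isClosed_iUnion fun j =>
    isClosed_iUnion_of_finite fun _ =>
      Subgroup.isClosed_of_discrete.mul_right_of_isCompact (hO j).isCompact_closure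

theorem isOpen_trimmedPatch (hO : ∀ i, IsPatch μ Γ (O i))
    (hlf : LocallyFinite fun i => (Γ : Set G) * closure (O i)) (i : ι) :
    IsOpen (trimmedPatch r Γ O i) :=
  (hO i).isOpen.sdiff (isClosed_iUnion_coe_mul_closure r hO hlf i)

theorem exists_mem_coe_mul_closure_trimmedPatch [IsWellOrder ι r] (hO : ∀ i, IsPatch μ Γ (O i))
    (hlf : LocallyFinite fun i => (Γ : Set G) * closure (O i))
    (hcov : ⋃ i, (Γ : Set G) * closure (O i) = univ) (x : G) :
    ∃ i, x ∈ (Γ : Set G) * closure (trimmedPatch r Γ O i) := by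
  obtain ⟨i, ⟨γ, hγ, y, hy, rfl⟩, hmin⟩ := IsWellFounded.wf.has_min (r := r)
    {i | x ∈ (Γ : Set G) * closure (O i)} (mem_iUnion.1 (hcov.symm ▸ mem_univ x))
  have hyA : y ∉ ⋃ (j) (_ : r j i), (Γ : Set G) * closure (O j) := fun hyA => by
    obtain ⟨j, hji, hyj⟩ := mem_iUnion₂.1 hyA
    exact hmin j ((Γ.mul_mem_coe_mul_iff hγ).2 hyj) hji
  refine ⟨i, γ, hγ, y, ?_, rfl⟩
  have := (isClosed_iUnion_coe_mul_closure r hO hlf i).isOpen_compl.inter_closure ⟨hyA, hy⟩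
  rwa [inter_comm] at this

theorem exists_fundamentalDomain_of_locallyFinite [μ.IsMulLeftInvariant] [BorelSpace G]
    [IsWellOrder ι r] (hO : ∀ i, IsPatch μ Γ (O i))
    (hlf : LocallyFinite fun i => (Γ : Set G) * closure (O i))
    (hcov : ⋃ i, (Γ : Set G) * closure (O i) = univ) :
    ∃ F : Set G, IsOpen F ∧ (∀ γ ∈ Γ, γ ≠ 1 → Disjoint F (γ • F)) ∧
      (Γ : Set G) * closure F = univ ∧ IsLocallyNull μ ((Γ : Set G) * (closure F \ F)) := by
  set P := trimmedPatch r Γ O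
  have hPlf : LocallyFinite P := hlf.subset fun i =>
    (sdiff_subset.trans subset_closure).trans (subset_mul_right _ Γ.one_mem)
  have hnull : IsLocallyNull μ (⋃ j, (Γ : Set G) * frontier (O j)) :=
    (hlf.subset fun j => mul_subset_mul_left frontier_subset_closure).isLocallyNull_iUnion fun j =>
      Γ.isLocallyNull_coe_mul (hO j).isCompact_closure frontier_subset_closure (hO j).null_frontier
  refine ⟨⋃ i, P i, isOpen_iUnion (isOpen_trimmedPatch r hO hlf),
    fun γ hγ hγ1 => disjoint_iUnion_trimmedPatch_smul r hO hγ hγ1, ?_, hnull.mono ?_⟩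
  · refine eq_univ_of_forall fun x => ?_
    obtain ⟨i, hx⟩ := exists_mem_coe_mul_closure_trimmedPatch r hO hlf hcov x
    exact mul_subset_mul_left (closure_mono (subset_iUnion P i)) hx
  · rw [hPlf.closure_iUnion]
    rintro _ ⟨γ, hγ, x, ⟨hxc, hxP⟩, rfl⟩
    obtain ⟨i, hxi⟩ := mem_iUnion.1 hxc
    obtain ⟨j, δ, hδ, y, hy, rfl⟩ := mem_iUnion.1 (closure_trimmedPatch_diff_subset r hO i
      ⟨hxi, fun h => hxP (mem_iUnion.2 ⟨i, h⟩)⟩)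
    exact mem_iUnion.2 ⟨j, γ * δ, Γ.mul_mem hγ hδ, y, hy, mul_assoc γ δ y⟩

end Assembly

/-- existence of fundamental domains.  Let `G` be a locally compact
Hausdorff topological group with Haar measure `μ` and `Γ ≤ G` a discrete subgroup.
Then there is an open set `F ⊆ G` with: (i) `F ∩ γF = ∅` for all `γ ∈ Γ ∖ {1}`;
(ii) `Γ·cl(F) = G`; (iii) `C ∩ Γ·(cl(F) ∖ F)` has Haar measure zero for every
compact `C ⊆ G`. -/
theorem stmt7 {G : Type*} [Group G] [TopologicalSpace G] [IsTopologicalGroup G]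
    [LocallyCompactSpace G] [T2Space G] [MeasurableSpace G] [BorelSpace G]
    (μ : Measure G) [μ.IsHaarMeasure]
    (Γ : Subgroup G) (hdisc : DiscreteTopology ↥Γ) :
    ∃ F : Set G, IsOpen F ∧
      (∀ γ ∈ Γ, γ ≠ 1 → F ∩ ((γ * ·) '' F) = ∅) ∧
      (Γ : Set G) * closure F = Set.univ ∧
      (∀ C : Set G, IsCompact C → μ (C ∩ ((Γ : Set G) * (closure F \ F))) = 0) := by
  obtain ⟨𝒪, h𝒪, hlf, hcov⟩ := exists_locallyFinite_isPatch_cover μ Γ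
  obtain ⟨F, hF, hdisj, hcovF, hnull⟩ := exists_fundamentalDomain_of_locallyFinite
    WellOrderingRel (fun O : 𝒪 => h𝒪 O O.2) hlf hcov
  exact ⟨F, hF, fun γ hγ hγ1 => (hdisj γ hγ hγ1).inter_eq, hcovF, hnull⟩
end

section
/- Let G be a topological group whose topology is induced by a left-invariant metric d (i.e., d(gx, gy) = d(x, y) for all g, x, y ∈ G) for which all closed balls are compact, and let Γ ⊆ G be a discrete subgroup. Define F = {x ∈ G : d(x,e) < d(x,γ) for all γ ∈ Γ ∖ {1}}. Then F = {x ∈ G : d(x,e) < d(x,γ) for all γ ∈ Γ ∖ {1} with d(γ,e) < 3·d(x,e)}, and F is an open subset of G. -/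
/-!
For the first claim, a point `p` with `3 · d(x, o) ≤ d(p, o)` is automatically farther from `x`
than `o` is, by the triangle inequality. Hence near a point `x` of the cell only the finitely many
points of `Γ` in a fixed ball around `o` can violate the defining inequalities, and each of those
finitely many strict inequalities persists on a neighbourhood of `x`. Finiteness comes from `Γ`
being closed (a discrete subgroup of a Hausdorff group) and discrete in a proper space.
-/

open Metric Filter Topology

section DirichletCell

variable {X : Type*} [MetricSpace X]

def dirichletCell (S : Set X) (o : X) : Set X :=
  {x | ∀ p ∈ S, p ≠ o → dist x o < dist x p}

theorem dist_lt_dist_of_three_mul_dist_le {x o p : X} (hpo : p ≠ o)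
    (hp : 3 * dist x o ≤ dist p o) : dist x o < dist x p := by
  have hpos : 0 < dist p o := dist_pos.2 hpo
  have htri : dist p o ≤ dist p x + dist x o := dist_triangle p x o
  rw [dist_comm p x] at htri
  linarith [dist_nonneg (x := x) (y := o)]

theorem mem_dirichletCell_iff {S : Set X} {o x : X} :
    x ∈ dirichletCell S o ↔
      ∀ p ∈ S, p ≠ o → dist p o < 3 * dist x o → dist x o < dist x p := by
  refine ⟨fun hx p hpS hpo _ => hx p hpS hpo, fun hx p hpS hpo => ?_⟩
  rcases lt_or_ge (dist p o) (3 * dist x o) with hp | hp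
  · exact hx p hpS hpo hp
  · exact dist_lt_dist_of_three_mul_dist_le hpo hp

theorem isOpen_dirichletCell {S : Set X} {o : X} (hS : ∀ r, (closedBall o r ∩ S).Finite) :
    IsOpen (dirichletCell S o) := by
  refine isOpen_iff_mem_nhds.2 fun x hx => ?_
  set R := dist x o + 1
  have hnear : ∀ᶠ y in 𝓝 x, dist y o < R :=
    (continuous_id.dist continuous_const).continuousAt.eventually_lt continuousAt_const
      (lt_add_one _)
  have hfar : ∀ᶠ y in 𝓝 x, ∀ p ∈ (closedBall o (3 * R) ∩ S) \ {o}, dist y o < dist y p :=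
    ((hS _).sdiff).eventually_all.2 fun p hp =>
      (continuous_id.dist continuous_const).continuousAt.eventually_lt
        (continuous_id.dist continuous_const).continuousAt (hx p hp.1.2 hp.2)
  filter_upwards [hnear, hfar] with y hyR hy
  refine mem_dirichletCell_iff.2 fun p hpS hpo hp => hy p ⟨⟨?_, hpS⟩, hpo⟩
  rw [mem_closedBall]
  linarith

end DirichletCell

theorem stmt9_general {G : Type*} [Group G] [MetricSpace G] [IsTopologicalGroup G] [ProperSpace G]
    (Γ : Subgroup G) (hdisc : DiscreteTopology ↥Γ) :
    ({x : G | ∀ γ ∈ Γ, γ ≠ 1 → dist x 1 < dist x γ} =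
      {x : G | ∀ γ ∈ Γ, γ ≠ 1 → dist γ (1 : G) < 3 * dist x 1 → dist x 1 < dist x γ}) ∧
    IsOpen {x : G | ∀ γ ∈ Γ, γ ≠ 1 → dist x 1 < dist x γ} := by
  have hfinite : ∀ r, (closedBall (1 : G) r ∩ Γ).Finite := fun r =>
    finite_isBounded_inter_isClosed DiscreteTopology.isDiscrete isBounded_closedBall
      Subgroup.isClosed_of_discrete
  exact ⟨Set.ext fun _ => mem_dirichletCell_iff (S := (Γ : Set G)),
    isOpen_dirichletCell (S := (Γ : Set G)) hfinite⟩

/-- Dirichlet domain, openness.  Let `G` be a topological group whose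
topology comes from a left-invariant metric with compact closed balls, and let `Γ ≤ G`
be discrete.  With `F = {x : d(x,1) < d(x,γ) ∀ γ ∈ Γ∖{1}}`, only the `γ` with
`d(γ,1) < 3·d(x,1)` matter, and `F` is open. -/
theorem stmt9 {G : Type*} [Group G] [MetricSpace G] [IsTopologicalGroup G] [ProperSpace G]
    (hinv : ∀ g x y : G, dist (g * x) (g * y) = dist x y)
    (Γ : Subgroup G) (hdisc : DiscreteTopology ↥Γ) :
    ({x : G | ∀ γ ∈ Γ, γ ≠ 1 → dist x 1 < dist x γ} =
      {x : G | ∀ γ ∈ Γ, γ ≠ 1 → dist γ (1 : G) < 3 * dist x 1 → dist x 1 < dist x γ}) ∧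
    IsOpen {x : G | ∀ γ ∈ Γ, γ ≠ 1 → dist x 1 < dist x γ} :=
  stmt9_general Γ hdisc
end

section
/- Let G be a topological group whose topology is induced by a left-invariant metric d (i.e., d(gx, gy) = d(x, y) for all g, x, y ∈ G) for which all closed balls are compact, and let Γ ⊆ G be a discrete subgroup. Define F = {x ∈ G : d(x,e) < d(x,γ) for all γ ∈ Γ ∖ {1}} and F' = {x ∈ G : d(x,e) ≤ d(x,γ) for all γ ∈ Γ ∖ {1}}. Then F ∩ γF = ∅ for every γ ∈ Γ ∖ {1}, and Γ·F' = G. -/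
open scoped Pointwise

/-!
Left invariance gives `d(γx, γy) = d(x, y)`. If `x ∈ F ∩ γF`, say `x = γy`, this turns the two
defining inequalities `d(x, 1) < d(x, γ)` and `d(y, 1) < d(y, γ⁻¹)` into `d(x, 1) < d(y, 1)` and
`d(y, 1) < d(x, 1)`. For the covering, a discrete subgroup is uniformly discrete (again by left
invariance), hence closed, so in a proper space every `g` has a nearest point `γ₀ ∈ Γ`; then
`γ₀⁻¹ g ∈ F'`.
-/

namespace Subgroup

variable {G : Type*} [Group G] [MetricSpace G]

/-- The Dirichlet domain `F` of `Γ` centred at `1`. -/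
def dirichletDomain (Γ : Subgroup G) : Set G :=
  {x | ∀ δ ∈ Γ, δ ≠ 1 → dist x 1 < dist x δ}

/-- The non-strict Dirichlet domain `F'`. -/
def closedDirichletDomain (Γ : Subgroup G) : Set G :=
  {x | ∀ δ ∈ Γ, δ ≠ 1 → dist x 1 ≤ dist x δ}

variable [IsIsometricSMul G G] (Γ : Subgroup G)

theorem dirichletDomain_inter_image_mul_eq_empty {γ : G} (hγ : γ ∈ Γ) (hγ1 : γ ≠ 1) :
    Γ.dirichletDomain ∩ (γ * ·) '' Γ.dirichletDomain = ∅ := by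
  refine Set.eq_empty_of_forall_notMem ?_
  rintro _ ⟨hx, y, hy, rfl⟩
  have h₁ : dist (γ * y) 1 < dist y 1 :=
    (hx γ hγ hγ1).trans_eq (by rw [← dist_mul_left γ y 1, mul_one])
  have h₂ : dist y 1 < dist (γ * y) 1 :=
    (hy γ⁻¹ (Γ.inv_mem hγ) (inv_ne_one.mpr hγ1)).trans_eq
      (by rw [← dist_mul_left γ y γ⁻¹, mul_inv_cancel])
  exact lt_asymm h₁ h₂

theorem exists_pairwise_le_dist_of_discreteTopology [DiscreteTopology Γ] :
    ∃ ε > 0, (Γ : Set G).Pairwise fun γ δ => ε ≤ dist γ δ := by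
  obtain ⟨ε, hε, hball⟩ := Metric.isOpen_iff.mp (isOpen_discrete {(1 : Γ)}) 1 rfl
  refine ⟨ε, hε, fun γ hγ δ hδ hne => not_lt.mp fun hlt => hne ?_⟩
  have hmem : (⟨γ⁻¹ * δ, Γ.mul_mem (Γ.inv_mem hγ) hδ⟩ : Γ) ∈ Metric.ball 1 ε := by
    rw [Metric.mem_ball, Subtype.dist_eq, ← dist_mul_left γ, mul_inv_cancel_left,
      OneMemClass.coe_one, mul_one, dist_comm]
    exact hlt
  exact inv_mul_eq_one.mp (congrArg Subtype.val (hball hmem))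

theorem isClosed_of_discreteTopology [DiscreteTopology Γ] : IsClosed (Γ : Set G) :=
  let ⟨_, hε, hΓ⟩ := Γ.exists_pairwise_le_dist_of_discreteTopology
  Metric.isClosed_of_pairwise_le_dist hε hΓ

theorem inv_mul_mem_closedDirichletDomain {g γ₀ : G} (hγ₀ : γ₀ ∈ Γ)
    (hnearest : ∀ γ ∈ Γ, dist g γ₀ ≤ dist g γ) : γ₀⁻¹ * g ∈ Γ.closedDirichletDomain := by
  intro δ hδ _
  rw [← dist_mul_left γ₀ _ 1, ← dist_mul_left γ₀ _ δ, mul_inv_cancel_left, mul_one]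
  exact hnearest _ (Γ.mul_mem hγ₀ hδ)

theorem mul_closedDirichletDomain_eq_univ [ProperSpace G] [DiscreteTopology Γ] :
    (Γ : Set G) * Γ.closedDirichletDomain = Set.univ := by
  refine Set.eq_univ_of_forall fun g => ?_
  obtain ⟨γ₀, hγ₀, hdist⟩ :=
    Γ.isClosed_of_discreteTopology.exists_infDist_eq_dist ⟨1, Γ.one_mem⟩ g
  have hnearest : ∀ γ ∈ Γ, dist g γ₀ ≤ dist g γ := fun γ hγ =>
    hdist ▸ Metric.infDist_le_dist_of_mem hγ
  exact ⟨γ₀, hγ₀, γ₀⁻¹ * g, Γ.inv_mul_mem_closedDirichletDomain hγ₀ hnearest,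
    mul_inv_cancel_left γ₀ g⟩

end Subgroup

theorem stmt10_general {G : Type*} [Group G] [MetricSpace G] [ProperSpace G]
    (hinv : ∀ g x y : G, dist (g * x) (g * y) = dist x y)
    (Γ : Subgroup G) (hdisc : DiscreteTopology ↥Γ) :
    (∀ γ ∈ Γ, γ ≠ 1 →
      {x : G | ∀ δ ∈ Γ, δ ≠ 1 → dist x 1 < dist x δ} ∩
        ((γ * ·) '' {x : G | ∀ δ ∈ Γ, δ ≠ 1 → dist x 1 < dist x δ}) = ∅) ∧
    (Γ : Set G) * {x : G | ∀ δ ∈ Γ, δ ≠ 1 → dist x 1 ≤ dist x δ} = Set.univ := by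
  have : IsIsometricSMul G G := ⟨fun g => Isometry.of_dist_eq (hinv g)⟩
  exact ⟨fun γ hγ hγ1 => Γ.dirichletDomain_inter_image_mul_eq_empty hγ hγ1,
    Γ.mul_closedDirichletDomain_eq_univ⟩

/-- Dirichlet domain, fundamental domain properties.  Let `G` be a
topological group whose topology comes from a left-invariant metric with compact closed
balls, and `Γ ≤ G` discrete.  With `F = {x : d(x,1) < d(x,γ) ∀ γ ∈ Γ∖{1}}` and
`F' = {x : d(x,1) ≤ d(x,γ) ∀ γ ∈ Γ∖{1}}`, one has `F ∩ γF = ∅` for `γ ∈ Γ∖{1}`,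
and `Γ·F' = G`. -/
theorem stmt10 {G : Type*} [Group G] [MetricSpace G] [IsTopologicalGroup G] [ProperSpace G]
    (hinv : ∀ g x y : G, dist (g * x) (g * y) = dist x y)
    (Γ : Subgroup G) (hdisc : DiscreteTopology ↥Γ) :
    (∀ γ ∈ Γ, γ ≠ 1 →
      {x : G | ∀ δ ∈ Γ, δ ≠ 1 → dist x 1 < dist x δ} ∩
        ((γ * ·) '' {x : G | ∀ δ ∈ Γ, δ ≠ 1 → dist x 1 < dist x δ}) = ∅) ∧
    (Γ : Set G) * {x : G | ∀ δ ∈ Γ, δ ≠ 1 → dist x 1 ≤ dist x δ} = Set.univ :=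
  stmt10_general hinv Γ hdisc
end

section
/- Let G be a locally compact Hausdorff topological group and Γ ⊆ G a discrete subgroup. Then there exists a continuous function ψ: G → [0,∞) such that: (i) for every compact set C ⊆ G, the set {γ ∈ Γ : ψ(γc) ≠ 0 for some c ∈ C} is finite; and (ii) Σ_{γ∈Γ} ψ(γx) = 1 for every x ∈ G. -/
/-!
A locally compact group has an open σ-compact subgroup `H`; the images of the cosets `x H` cut
the orbit space `Γ \ G` into disjoint open σ-compact pieces, so `Γ \ G` is paracompact. Take
compactly supported bumps `β x` with `β x x = 1` and a partition of unity `(f x)` on `Γ \ G`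
subordinate to the images of their supports. Then `φ = ∑ᶠ x, (f x ∘ π) * β x` vanishes on no
orbit, and since `Γ` acts properly discontinuously only finitely many translates `φ (γ • ·)` meet
a given compact set. Normalizing, `ψ = φ / ∑ γ, φ (γ • ·)` is the required function.
-/

open Set Function Topology Pointwise

section Paracompact

variable {X : Type*} [TopologicalSpace X]

theorem IsOpen.exists_refinement_of_paracompactSpace {α : Type*} {p : Set X} (hp : IsOpen p)
    [ParacompactSpace p] {u : α → Set X} (hu_open : ∀ a, IsOpen (u a))
    (hu_cover : ⋃ a, u a = univ) :
    ∃ v : α → Set X, (∀ a, IsOpen (v a)) ∧ (∀ a, v a ⊆ u a ∩ p) ∧ p ⊆ ⋃ a, v a ∧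
      ∀ x ∈ p, ∃ N ∈ 𝓝 x, {a | (v a ∩ N).Nonempty}.Finite := by
  obtain ⟨w, hw_open, hw_cover, hw_lf, hw_sub⟩ :=
    precise_refinement (fun a => ((↑) : p → X) ⁻¹' u a)
      (fun a => (hu_open a).preimage continuous_subtype_val)
      (by simp only [← preimage_iUnion, hu_cover, preimage_univ])
  refine ⟨fun a => (↑) '' w a, fun a => hp.isOpenMap_subtype_val _ (hw_open a),
    fun a => image_subset_iff.2 fun x hx => ⟨hw_sub a hx, x.2⟩, fun x hx => ?_, fun x hx => ?_⟩
  · obtain ⟨a, ha⟩ := mem_iUnion.1 (hw_cover.symm ▸ mem_univ (⟨x, hx⟩ : p))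
    exact mem_iUnion.2 ⟨a, ⟨x, hx⟩, ha, rfl⟩
  · obtain ⟨N, hN, hN_fin⟩ := hw_lf ⟨x, hx⟩
    refine ⟨(↑) '' N, hp.isOpenMap_subtype_val.image_mem_nhds hN, hN_fin.subset ?_⟩
    rintro a ⟨_, ⟨y, hy, rfl⟩, z, hz, hzy⟩
    exact ⟨y, hy, Subtype.val_injective hzy ▸ hz⟩

theorem paracompactSpace_of_pairwiseDisjoint {P : Set (Set X)} (hP_open : ∀ p ∈ P, IsOpen p)
    (hP_disj : P.PairwiseDisjoint id) (hP_cover : ⋃₀ P = univ)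
    (hP_para : ∀ p ∈ P, ParacompactSpace p) : ParacompactSpace X := by
  refine ⟨fun α u hu_open hu_cover => ?_⟩
  have key := fun p (hp : p ∈ P) =>
    have := hP_para p hp; (hP_open p hp).exists_refinement_of_paracompactSpace hu_open hu_cover
  choose! v hv_open hv_sub hv_cover hv_lf using key
  have hv_mem : ∀ p ∈ P, ∀ x ∈ p, ∀ q ∈ P, ∀ a, x ∈ v q a → q = p := fun p hp x hx q hq a hxq =>
    hP_disj.elim hq hp (not_disjoint_iff.2 ⟨x, ((hv_sub q hq a) hxq).2, hx⟩)
  refine ⟨α, fun a => ⋃ p ∈ P, v p a, fun a => isOpen_biUnion fun p hp => hv_open p hp a, ?_, ?_,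
    fun a => ⟨a, iUnion₂_subset fun p hp => (hv_sub p hp a).trans inter_subset_left⟩⟩
  · refine eq_univ_of_forall fun x => ?_
    obtain ⟨p, hp, hx⟩ := mem_sUnion.1 (hP_cover.symm ▸ mem_univ x)
    obtain ⟨a, ha⟩ := mem_iUnion.1 (hv_cover p hp hx)
    exact mem_iUnion.2 ⟨a, mem_biUnion hp ha⟩
  · intro x
    obtain ⟨p, hp, hx⟩ := mem_sUnion.1 (hP_cover.symm ▸ mem_univ x)
    obtain ⟨N, hN, hN_fin⟩ := hv_lf p hp x hx
    refine ⟨N ∩ p, Filter.inter_mem hN ((hP_open p hp).mem_nhds hx), hN_fin.subset ?_⟩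
    rintro a ⟨y, hy, hyN, hyp⟩
    obtain ⟨q, hq, hyq⟩ := mem_iUnion₂.1 hy
    exact ⟨y, hv_mem p hp y hyp q hq a hyq ▸ hyq, hyN⟩

end Paracompact

section TopologicalGroup

variable {G : Type*} [Group G] [TopologicalSpace G] [IsTopologicalGroup G]

theorem Subgroup.isSigmaCompact_closure {K : Set G} (hK : IsCompact K) :
    IsSigmaCompact (Subgroup.closure K : Set G) := by
  set S := K ∪ K⁻¹ ∪ {1}
  have hS_compact : ∀ n : ℕ, IsCompact (S ^ n) := by
    intro n
    induction n with
    | zero => simp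
    | succ n ih => rw [pow_succ]; exact ih.mul ((hK.union hK.inv).union isCompact_singleton)
  have hS_inv : S⁻¹ = S := by simp [S, union_comm K]
  have hS_sub : S ⊆ Subgroup.closure K := union_subset
    (union_subset Subgroup.subset_closure (Subgroup.inv_subset_closure K))
    (singleton_subset_iff.2 (Subgroup.one_mem _))
  suffices (Subgroup.closure K : Set G) = ⋃ n : ℕ, S ^ n from
    this ▸ isSigmaCompact_iUnion_of_isCompact _ hS_compact
  refine Subset.antisymm (fun x hx => ?_) (iUnion_subset fun n => ?_)
  · induction hx using Subgroup.closure_induction with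
    | mem x hx => exact mem_iUnion.2 ⟨1, by simp [S, hx]⟩
    | one => exact mem_iUnion.2 ⟨0, by simp⟩
    | mul x y _ _ hx hy =>
      obtain ⟨m, hm⟩ := mem_iUnion.1 hx
      obtain ⟨n, hn⟩ := mem_iUnion.1 hy
      exact mem_iUnion.2 ⟨m + n, pow_add S m n ▸ mul_mem_mul hm hn⟩
    | inv x _ hx =>
      obtain ⟨n, hn⟩ := mem_iUnion.1 hx
      exact mem_iUnion.2 ⟨n, by simpa [← inv_pow, hS_inv] using inv_mem_inv.2 hn⟩
  · exact pow_subset hS_sub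

theorem exists_isOpen_isSigmaCompact_subgroup [WeaklyLocallyCompactSpace G] :
    ∃ H : Subgroup G, IsOpen (H : Set G) ∧ IsSigmaCompact (H : Set G) := by
  obtain ⟨K, hK, hK_nhds⟩ := exists_compact_mem_nhds (1 : G)
  exact ⟨_, Subgroup.isOpen_of_mem_nhds _ (Filter.mem_of_superset hK_nhds Subgroup.subset_closure),
    Subgroup.isSigmaCompact_closure hK⟩

theorem Subgroup.paracompactSpace_quotient_orbitRel [LocallyCompactSpace G] (Γ : Subgroup G)
    [T2Space (Quotient (MulAction.orbitRel Γ G))] :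
    ParacompactSpace (Quotient (MulAction.orbitRel Γ G)) := by
  obtain ⟨H, hH_open, hH_sigma⟩ := exists_isOpen_isSigmaCompact_subgroup (G := G)
  set π := Quotient.mk (MulAction.orbitRel Γ G)
  have hπ : IsOpenQuotientMap π := MulAction.isOpenQuotientMap_quotientMk
  have := hπ.locallyCompactSpace
  set piece : G → Set (Quotient (MulAction.orbitRel Γ G)) := fun x => π '' (x • (H : Set G))
  have hπ_smul : ∀ (γ : Γ) y, π (γ • y) = π y := fun γ y => Quotient.sound (MulAction.mem_orbit y γ)
  have piece_eq : ∀ x y, π y ∈ piece x → piece y = piece x := by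
    rintro x y ⟨_, ⟨h, hh, rfl⟩, hxy⟩
    obtain ⟨γ, rfl⟩ := Quotient.exact hxy.symm
    have hcoset : ((γ : G) * (x * h)) • (H : Set G) = (γ : G) • x • (H : Set G) := by
      rw [mul_smul, mul_smul, smul_coe_set hh]
    change π '' (((γ : G) * (x * h)) • (H : Set G)) = π '' (x • (H : Set G))
    rw [hcoset, ← image_smul, image_image]
    exact image_congr fun y _ => hπ_smul γ y
  have piece_open : ∀ x, IsOpen (piece x) := fun x => hπ.isOpenMap _ (hH_open.smul x)
  refine paracompactSpace_of_pairwiseDisjoint (P := range piece) (forall_mem_range.2 piece_open)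
    ?_ ?_ (forall_mem_range.2 fun x => ?_)
  · rintro _ ⟨x, rfl⟩ _ ⟨y, rfl⟩ hne
    refine disjoint_left.2 fun z hzx hzy => hne ?_
    obtain ⟨w, rfl⟩ := hπ.surjective z
    exact (piece_eq x w hzx).symm.trans (piece_eq y w hzy)
  · exact eq_univ_of_forall fun z =>
      ⟨piece z.out, mem_range_self _, z.out, ⟨1, one_mem H, mul_one _⟩, z.out_eq⟩
  · have := (piece_open x).locallyCompactSpace
    have : SigmaCompactSpace (piece x) := isSigmaCompact_iff_sigmaCompactSpace.1
      ((hH_sigma.image (continuous_const_smul x)).image hπ.continuous)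
    infer_instance

end TopologicalGroup

section GroupAction

variable {Γ X : Type*} [Group Γ] [MulAction Γ X] [TopologicalSpace X] [ContinuousConstSMul Γ X]

theorem exists_continuous_hasSum_smul_eq_one_of_locallyFinite {φ : X → ℝ} (hφ : Continuous φ)
    (hφ_nonneg : ∀ x, 0 ≤ φ x) (hφ_lf : LocallyFinite fun γ : Γ => support fun x => φ (γ • x))
    (hφ_pos : ∀ x, ∃ γ : Γ, φ (γ • x) ≠ 0) :
    ∃ ψ : X → ℝ, Continuous ψ ∧ (∀ x, 0 ≤ ψ x) ∧
      (LocallyFinite fun γ : Γ => support fun x => ψ (γ • x)) ∧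
      ∀ x, HasSum (fun γ : Γ => ψ (γ • x)) 1 := by
  set Φ : X → ℝ := fun x => ∑ᶠ γ : Γ, φ (γ • x)
  have hΦ_hasSum : ∀ x, HasSum (fun γ : Γ => φ (γ • x)) (Φ x) := fun x => by
    have hfin : (support fun γ : Γ => φ (γ • x)).Finite := hφ_lf.point_finite x
    rw [show Φ x = _ from (tsum_eq_finsum (L := .unconditional Γ) hfin).symm]
    exact (summable_of_hasFiniteSupport hfin).hasSum
  have hΦ_pos : ∀ x, 0 < Φ x := fun x =>
    have ⟨γ, hγ⟩ := hφ_pos x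
    ((hφ_nonneg _).lt_of_ne' hγ).trans_le (le_hasSum (hΦ_hasSum x) γ fun _ _ => hφ_nonneg _)
  have hΦ_smul : ∀ (γ : Γ) x, Φ (γ • x) = Φ x := fun γ x =>
    (hΦ_hasSum (γ • x)).unique <| by
      simpa [comp_def, mul_smul] using (Equiv.mulRight γ).hasSum_iff.2 (hΦ_hasSum x)
  have hΦ : Continuous Φ := continuous_finsum (fun γ => hφ.comp (continuous_const_smul γ)) hφ_lf
  refine ⟨fun x => φ x / Φ x, hφ.div hΦ fun x => (hΦ_pos x).ne',
    fun x => div_nonneg (hφ_nonneg x) (hΦ_pos x).le,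
    hφ_lf.subset fun γ x hx => (div_ne_zero_iff.1 hx).1, fun x => ?_⟩
  simp only [hΦ_smul]
  simpa [(hΦ_pos x).ne'] using (hΦ_hasSum x).div_const (Φ x)

theorem ProperlyDiscontinuousSMul.exists_continuous_locallyFinite_smul_ne_zero
    [LocallyCompactSpace X] [T2Space X] [ProperlyDiscontinuousSMul Γ X]
    [ParacompactSpace (Quotient (MulAction.orbitRel Γ X))] :
    ∃ φ : X → ℝ, Continuous φ ∧ (∀ x, 0 ≤ φ x) ∧
      (LocallyFinite fun γ : Γ => support fun x => φ (γ • x)) ∧ ∀ x, ∃ γ : Γ, φ (γ • x) ≠ 0 := by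
  set π := Quotient.mk (MulAction.orbitRel Γ X)
  have hπ : IsOpenQuotientMap π := MulAction.isOpenQuotientMap_quotientMk
  have hπ_smul : ∀ (γ : Γ) x, π (γ • x) = π x := fun γ x => Quotient.sound (MulAction.mem_orbit x γ)
  choose β hβ_one _ hβ_compact hβ_mem using fun x : X =>
    exists_continuous_one_zero_of_isCompact (isCompact_singleton (x := x)) isClosed_empty
      (disjoint_empty _)
  obtain ⟨f, hf⟩ := PartitionOfUnity.exists_isSubordinate isClosed_univ
    (fun x => π '' support (β x)) (fun x => hπ.isOpenMap _ (β x).continuous.isOpen_support)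
    fun z _ => have ⟨x, hx⟩ := hπ.surjective z
      mem_iUnion.2 ⟨x, x, by simp [hβ_one x rfl], hx⟩
  set φ : X → ℝ := fun y => ∑ᶠ x, f x (π y) * β x y
  have hφ_ne : ∀ {y}, φ y ≠ 0 → ∃ x, f x (π y) ≠ 0 ∧ β x y ≠ 0 := fun {y} h => by
    obtain ⟨x, hx⟩ : ∃ x, f x (π y) * β x y ≠ 0 := by
      by_contra! h'
      exact h (finsum_eq_zero_of_forall_eq_zero h')
    exact ⟨x, left_ne_zero_of_mul hx, right_ne_zero_of_mul hx⟩
  refine ⟨φ, ?_, fun y => finsum_nonneg fun x => mul_nonneg (f.nonneg _ _) (hβ_mem x y).1, ?_, ?_⟩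
  · exact continuous_finsum (fun x => ((f x).continuous.comp hπ.continuous).mul (β x).continuous)
      ((f.locallyFinite.preimage_continuous hπ.continuous).subset fun x =>
        support_mul_subset_left _ _)
  · intro y₀
    obtain ⟨C, hC, hC_nhds⟩ := exists_compact_mem_nhds y₀
    have hI := f.locallyFinite.finite_nonempty_inter_compact (hC.image hπ.continuous)
    refine ⟨C, hC_nhds, (hI.biUnion fun x _ =>
      ProperlyDiscontinuousSMul.finite_disjoint_inter_image hC (hβ_compact x)).subset ?_⟩
    rintro γ ⟨c, hγc, hc⟩
    obtain ⟨x, hfx, hβx⟩ := hφ_ne hγc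
    exact mem_iUnion₂.2 ⟨x, ⟨π c, hπ_smul γ c ▸ hfx, c, hc, rfl⟩, γ • c, ⟨c, hc, rfl⟩,
      subset_tsupport _ hβx⟩
  · intro y
    obtain ⟨x, hx⟩ := f.exists_pos (mem_univ (π y))
    obtain ⟨y', hy', hy'y⟩ := hf x (subset_tsupport _ hx.ne')
    obtain ⟨γ, rfl⟩ : ∃ γ : Γ, γ • y = y' := Quotient.exact hy'y
    have hfin : (support fun x' => f x' (π (γ • y)) * β x' (γ • y)).Finite :=
      (f.locallyFinite.point_finite _).subset fun x' => left_ne_zero_of_mul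
    refine ⟨γ, (lt_of_lt_of_le ?_ (single_le_finsum x hfin fun x' =>
      mul_nonneg (f.nonneg _ _) (hβ_mem x' _).1)).ne'⟩
    exact mul_pos (hπ_smul γ y ▸ hx) ((hβ_mem x _).1.lt_of_ne' hy')

end GroupAction

/-- partition of unity along `Γ`-orbits.  Let `G` be a locally
compact Hausdorff topological group and `Γ ≤ G` discrete.  Then there is a continuous
`ψ : G → [0,∞)` such that for every compact `C ⊆ G` only finitely many `γ ∈ Γ` have
`ψ(γ·) ≠ 0` somewhere on `C`, and `Σ_{γ∈Γ} ψ(γx) = 1` for every `x ∈ G`. -/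
theorem stmt11 {G : Type*} [Group G] [TopologicalSpace G] [IsTopologicalGroup G]
    [LocallyCompactSpace G] [T2Space G]
    (Γ : Subgroup G) (hdisc : DiscreteTopology ↥Γ) :
    ∃ ψ : G → ℝ, Continuous ψ ∧ (∀ x, 0 ≤ ψ x) ∧
      (∀ C : Set G, IsCompact C → {γ : ↥Γ | ∃ c ∈ C, ψ ((γ : G) * c) ≠ 0}.Finite) ∧
      (∀ x : G, HasSum (fun γ : ↥Γ => ψ ((γ : G) * x)) 1) := by
  have : ProperlyDiscontinuousSMul Γ G := properlyDiscontinuousSMul_iff_properSMul.2 inferInstance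
  have := Γ.paracompactSpace_quotient_orbitRel
  obtain ⟨φ, hφ, hφ_nonneg, hφ_lf, hφ_pos⟩ :=
    ProperlyDiscontinuousSMul.exists_continuous_locallyFinite_smul_ne_zero (Γ := Γ) (X := G)
  obtain ⟨ψ, hψ, hψ_nonneg, hψ_lf, hψ_sum⟩ :=
    exists_continuous_hasSum_smul_eq_one_of_locallyFinite hφ hφ_nonneg hφ_lf hφ_pos
  refine ⟨ψ, hψ, hψ_nonneg, fun C hC => (hψ_lf.finite_nonempty_inter_compact hC).subset ?_, hψ_sum⟩
  rintro γ ⟨c, hc, hψc⟩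
  exact ⟨c, hψc, hc⟩
end

section
/- For n ∈ ℕ, n ≥ 1, let Γₙ = {(n²a, b/n) : a, b ∈ ℤ} ⊆ ℝ². Then each Γₙ is a cocompact lattice in the additive group ℝ² with covolume vol(Γₙ\ℝ²) = n, so the covolumes tend to infinity; nevertheless (Γₙ) is not BS-convergent to {0}: for the compact set C = [−1,1]² one has (0, 1/n) ∈ (Γₙ ∖ {0}) ∩ C for every n ≥ 1, and since ℝ² is abelian, x + (Γₙ ∖ {0}) − x = Γₙ ∖ {0} for every x, so P_{Γₙ\ℝ²}({x ∈ Γₙ\ℝ² : (x + (Γₙ ∖ {0}) − x) ∩ C ≠ ∅}) = 1 for all n ≥ 1; in particular this probability does not tend to 0. -/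
/-! `Γₙ` is the product of the cyclic subgroups `n²ℤ` and `n⁻¹ℤ` of `ℝ`, so it is discrete
and the box `(0, n²] × (0, 1/n]`, of area `n`, is a fundamental domain with compact closure.
Conjugation is trivial in the abelian group `ℝ²`, so as soon as `Γ ∖ {0}` meets `C`, as
`(0, 1/n)` does for `C = [-1, 1]²`, every coset lies in the event of BS-convergence, which
therefore has probability `1`. -/

open MeasureTheory Filter Topology Set
open scoped ENNReal

/-- The lattice `Γₙ = n²ℤ × (1/n)ℤ ⊆ ℝ²`. -/
def Gam (n : ℕ) : AddSubgroup (ℝ × ℝ) where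
  carrier := {p | ∃ a b : ℤ, p = ((n : ℝ) ^ 2 * (a : ℝ), (b : ℝ) / (n : ℝ))}
  zero_mem' := ⟨0, 0, by simp [Prod.ext_iff]⟩
  add_mem' := by
    rintro p q ⟨a, b, rfl⟩ ⟨c, d, rfl⟩
    refine ⟨a + c, b + d, Prod.ext ?_ ?_⟩ <;>
      simp only [Prod.fst_add, Prod.snd_add] <;> push_cast <;> ring
  neg_mem' := by
    rintro p ⟨a, b, rfl⟩
    refine ⟨-a, -b, Prod.ext ?_ ?_⟩ <;>
      simp only [Prod.fst_neg, Prod.snd_neg] <;> push_cast <;> ring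

namespace AddSubgroup

variable {G G' : Type*} [AddGroup G] [AddGroup G'] {H : AddSubgroup G} {K : AddSubgroup G'}

instance discreteTopology_prod [TopologicalSpace G] [TopologicalSpace G'] [DiscreteTopology H]
    [DiscreteTopology K] : DiscreteTopology (H.prod K) :=
  .of_continuous_injective (f := prodEquiv H K)
    ((continuous_subtype_val.fst.subtype_mk _).prodMk (continuous_subtype_val.snd.subtype_mk _))
    (prodEquiv H K).injective

lemma existsUnique_vadd_mem_prod {s : Set G} {t : Set G'} (hs : ∀ x, ∃! g : H, g +ᵥ x ∈ s)
    (ht : ∀ y, ∃! g : K, g +ᵥ y ∈ t) (p : G × G') :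
    ∃! g : H.prod K, g +ᵥ p ∈ s ×ˢ t := by
  refine (prodEquiv H K).symm.bijective.existsUnique_iff.2 ?_
  obtain ⟨a, ha, ha'⟩ := hs p.1
  obtain ⟨b, hb, hb'⟩ := ht p.2
  exact ⟨(a, b), ⟨ha, hb⟩, fun g hg => Prod.ext (ha' _ hg.1) (hb' _ hg.2)⟩

end AddSubgroup

lemma existsUnique_vadd_mem_Ioc_zmultiples {T : ℝ} (hT : 0 < T) (x : ℝ) :
    ∃! g : AddSubgroup.zmultiples T, g +ᵥ x ∈ Ioc 0 T := by
  have : Function.Bijective (codRestrict (fun n : ℤ => n • T) (AddSubgroup.zmultiples T) _) :=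
    (Equiv.ofInjective (fun n : ℤ => n • T) (zsmul_left_strictMono hT).injective).bijective
  refine this.existsUnique_iff.2 ?_
  simpa only [add_comm x, zero_add] using! existsUnique_add_zsmul_mem_Ioc hT x 0

lemma QuotientAddGroup.compactSpace_of_forall_exists_vadd_mem {G : Type*} [AddCommGroup G]
    [TopologicalSpace G] {Γ : AddSubgroup G} {K : Set G} (hK : IsCompact K)
    (h : ∀ x, ∃ g : Γ, g +ᵥ x ∈ K) : CompactSpace (G ⧸ Γ) := by
  refine ⟨?_⟩
  have : ((↑) : G → G ⧸ Γ) '' K = univ := by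
    refine eq_univ_of_forall fun q => ?_
    obtain ⟨x, rfl⟩ := QuotientAddGroup.mk_surjective q
    obtain ⟨g, hg⟩ := h x
    refine ⟨g +ᵥ x, hg, ?_⟩
    rw [QuotientAddGroup.eq]
    simp [AddSubgroup.vadd_def]
  rw [← this]
  exact hK.image continuous_quotient_mk'

lemma Gam_eq_prod (n : ℕ) :
    Gam n =
      (AddSubgroup.zmultiples ((n : ℝ) ^ 2)).prod (AddSubgroup.zmultiples (n : ℝ)⁻¹) := by
  ext ⟨x, y⟩
  simp only [Gam, AddSubgroup.mem_mk, AddSubmonoid.mem_mk, AddSubsemigroup.mem_mk, mem_ofPred_eq,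
    Prod.mk.injEq, AddSubgroup.mem_prod, AddSubgroup.mem_zmultiples_iff, zsmul_eq_mul]
  constructor
  · rintro ⟨a, b, rfl, rfl⟩
    exact ⟨⟨a, mul_comm _ _⟩, ⟨b, div_eq_mul_inv _ _ |>.symm⟩⟩
  · rintro ⟨⟨a, rfl⟩, ⟨b, rfl⟩⟩
    exact ⟨a, b, mul_comm _ _, div_eq_mul_inv _ _⟩

lemma existsUnique_vadd_mem_Gam_box {n : ℕ} (hn : 1 ≤ n) (x : ℝ × ℝ) :
    ∃! g : Gam n, g +ᵥ x ∈ Ioc 0 ((n : ℝ) ^ 2) ×ˢ Ioc 0 (n : ℝ)⁻¹ := by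
  have hn : (0 : ℝ) < n := by exact_mod_cast hn
  rw [Gam_eq_prod]
  exact AddSubgroup.existsUnique_vadd_mem_prod
    (existsUnique_vadd_mem_Ioc_zmultiples (by positivity))
    (existsUnique_vadd_mem_Ioc_zmultiples (by positivity)) x

lemma isAddFundamentalDomain_Gam_box {n : ℕ} (hn : 1 ≤ n) :
    IsAddFundamentalDomain (Gam n) (Ioc 0 ((n : ℝ) ^ 2) ×ˢ Ioc 0 (n : ℝ)⁻¹) volume :=
  .mk' (measurableSet_Ioc.prod measurableSet_Ioc).nullMeasurableSet
    (existsUnique_vadd_mem_Gam_box hn)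

lemma volume_Gam_box (n : ℕ) :
    volume (Ioc 0 ((n : ℝ) ^ 2) ×ˢ Ioc 0 (n : ℝ)⁻¹) = n := by
  rw [Measure.volume_eq_prod, Measure.prod_prod, Real.volume_Ioc, Real.volume_Ioc, sub_zero,
    sub_zero, ← ENNReal.ofReal_mul (by positivity), sq, mul_self_mul_inv, ENNReal.ofReal_natCast]

instance instDiscreteTopologyGam (n : ℕ) : DiscreteTopology (Gam n) := by
  rw [Gam_eq_prod]; infer_instance

lemma compactSpace_quotient_Gam {n : ℕ} (hn : 1 ≤ n) : CompactSpace ((ℝ × ℝ) ⧸ Gam n) :=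
  QuotientAddGroup.compactSpace_of_forall_exists_vadd_mem (isCompact_Icc.prod isCompact_Icc)
    fun x => (existsUnique_vadd_mem_Gam_box hn x).exists.imp fun _ hg =>
      prod_mono Ioc_subset_Icc_self Ioc_subset_Icc_self hg

section BenjaminiSchramm

variable {G : Type*} [AddCommGroup G]

-- The event `{x : (x + (Γ ∖ {0}) - x) ∩ C ≠ ∅}` of the definition of BS-convergence to `{0}`.
def bsSet (Γ : AddSubgroup G) (C : Set G) : Set (G ⧸ Γ) :=
  {q | ∃ x : G, (x : G ⧸ Γ) = q ∧
    (((fun y => x + y - x) '' ((Γ : Set G) \ {0})) ∩ C).Nonempty}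

lemma image_add_sub_cancel_left (x : G) (s : Set G) : (fun y => x + y - x) '' s = s := by
  simp only [add_sub_cancel_left, image_id']

lemma bsSet_eq_univ {Γ : AddSubgroup G} {C : Set G} (h : ((Γ : Set G) \ {0} ∩ C).Nonempty) :
    bsSet Γ C = univ :=
  eq_univ_of_forall fun q => (QuotientAddGroup.mk_surjective q).imp fun x hx =>
    ⟨hx, by rwa [image_add_sub_cancel_left]⟩

lemma measure_bsSet_eq_one {Γ : AddSubgroup G} {C : Set G}
    (h : ((Γ : Set G) \ {0} ∩ C).Nonempty)
    [MeasurableSpace (G ⧸ Γ)] (P : Measure (G ⧸ Γ)) [IsProbabilityMeasure P] :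
    P (bsSet Γ C) = 1 := by
  rw [bsSet_eq_univ h, measure_univ]

end BenjaminiSchramm

lemma zero_one_div_mem_Gam_inter_Icc {n : ℕ} (hn : 1 ≤ n) :
    ((0, 1 / n) : ℝ × ℝ) ∈ Gam n ∧ ((0, 1 / n) : ℝ × ℝ) ≠ 0 ∧
      ((0, 1 / n) : ℝ × ℝ) ∈ Icc ((-1, -1) : ℝ × ℝ) (1, 1) := by
  have hn : (1 : ℝ) ≤ n := by exact_mod_cast hn
  have hpos : (0 : ℝ) < 1 / n := by positivity
  refine ⟨⟨0, 1, by simp⟩, fun h => hpos.ne' (congrArg Prod.snd h), ?_, ?_⟩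
  · exact ⟨by norm_num, by show (-1 : ℝ) ≤ 1 / n; linarith⟩
  · exact ⟨by norm_num, by show 1 / (n : ℝ) ≤ 1; exact div_le_one_of_le₀ hn n.cast_nonneg⟩

/-- the example in Section 1.  The lattices `Γₙ = n²ℤ × (1/n)ℤ` in
`ℝ²` are discrete and cocompact with covolume `n` (so the covolumes tend to infinity),
yet `(Γₙ)` is not BS-convergent to `{0}`: with `C = [-1,1]²` one has
`(0,1/n) ∈ (Γₙ∖{0}) ∩ C`, by commutativity `x + (Γₙ∖{0}) - x = Γₙ∖{0}`, hence the
BS-probability equals `1` for all `n ≥ 1` and does not tend to `0`. -/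
theorem stmt15 :
    (∀ n : ℕ, 1 ≤ n → DiscreteTopology ↥(Gam n)) ∧
    (∀ n : ℕ, 1 ≤ n → CompactSpace ((ℝ × ℝ) ⧸ Gam n)) ∧
    (∀ n : ℕ, 1 ≤ n → ∃ F : Set (ℝ × ℝ),
      IsAddFundamentalDomain ↥(Gam n) F volume ∧ volume F = (n : ℝ≥0∞)) ∧
    Tendsto (fun n : ℕ => (n : ℝ≥0∞)) atTop (𝓝 ⊤) ∧
    (∀ n : ℕ, 1 ≤ n →
      ((0, 1 / n) : ℝ × ℝ) ∈ Gam n ∧ ((0, 1 / n) : ℝ × ℝ) ≠ 0 ∧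
      ((0, 1 / n) : ℝ × ℝ) ∈ Set.Icc ((-1, -1) : ℝ × ℝ) (1, 1)) ∧
    (∀ (n : ℕ) (x : ℝ × ℝ),
      (fun y => x + y - x) '' ((Gam n : Set (ℝ × ℝ)) \ {0}) =
        (Gam n : Set (ℝ × ℝ)) \ {0}) ∧
    (∀ n : ℕ, 1 ≤ n → ∀ P : Measure ((ℝ × ℝ) ⧸ Gam n), IsProbabilityMeasure P →
      P {q | ∃ x : ℝ × ℝ, (x : (ℝ × ℝ) ⧸ Gam n) = q ∧
        (((fun y => x + y - x) '' ((Gam n : Set (ℝ × ℝ)) \ {0})) ∩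
          Set.Icc ((-1, -1) : ℝ × ℝ) (1, 1)).Nonempty} = 1) ∧
    (∀ P : (n : ℕ) → Measure ((ℝ × ℝ) ⧸ Gam n),
      (∀ n : ℕ, 1 ≤ n → IsProbabilityMeasure (P n)) →
      ¬ Tendsto (fun n : ℕ => P n {q | ∃ x : ℝ × ℝ, (x : (ℝ × ℝ) ⧸ Gam n) = q ∧
          (((fun y => x + y - x) '' ((Gam n : Set (ℝ × ℝ)) \ {0})) ∩
            Set.Icc ((-1, -1) : ℝ × ℝ) (1, 1)).Nonempty})
        atTop (𝓝 0)) := by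
  have hmeet {n : ℕ} (hn : 1 ≤ n) :
      ((Gam n : Set (ℝ × ℝ)) \ {0} ∩ Icc (-1, -1) (1, 1)).Nonempty :=
    let ⟨hmem, hne, hC⟩ := zero_one_div_mem_Gam_inter_Icc hn
    ⟨_, ⟨hmem, hne⟩, hC⟩
  have hprob {n : ℕ} (hn : 1 ≤ n) (P : Measure ((ℝ × ℝ) ⧸ Gam n))
      (hP : IsProbabilityMeasure P) :
      P (bsSet (Gam n) (Icc (-1, -1) (1, 1))) = 1 :=
    measure_bsSet_eq_one (hmeet hn) P
  refine ⟨fun n _ => inferInstance, fun n => compactSpace_quotient_Gam,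
    fun n hn => ⟨_, isAddFundamentalDomain_Gam_box hn, volume_Gam_box n⟩,
    ENNReal.tendsto_nat_nhds_top, fun n => zero_one_div_mem_Gam_inter_Icc,
    fun n x => image_add_sub_cancel_left x _, fun n => hprob, fun P hP h => ?_⟩
  have h1 : Tendsto (fun n => P n (bsSet (Gam n) (Icc (-1, -1) (1, 1)))) atTop (𝓝 1) :=
    tendsto_const_nhds.congr'
      (eventually_atTop.2 ⟨1, fun n hn => (hprob hn (P n) (hP n hn)).symm⟩)
  exact one_ne_zero (tendsto_nhds_unique h1 h)
end
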